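/- arXiv:2206.11189 — 3 statements merged into one kernel-verified Lean document; each statement's English description precedes it below -/
import Mathlib

section
/- The number of strong realizations in ℙ³(𝔽_q) of the 6-point configuration with full lines 𝓛 = {{0,1,2},{3,4,5}} and full planes 𝓗 = {{0,1,2,3},{0,1,2,4},{0,1,2,5},{0,3,4,5},{1,3,4,5},{2,3,4,5}} is A₆(4,q) = (q²+q+1)(q²+1)(q+1)²(q−1)²·q⁶. -/
/-- A set of points of `ℙ³(F)` (the projectivization of `F⁴`) is collinear if
representative vectors of the points span a subspace of `F⁴` of dimension at most 2. -/
def IsCollinearSet (F : Type*) [Field F] (S : Set (Projectivization F (Fin 4 → F))) : Prop :=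
  Module.finrank F (Submodule.span F (Projectivization.rep '' S)) ≤ 2

/-- A set of points of `ℙ³(F)` is coplanar if representative vectors of the points span a
subspace of `F⁴` of dimension at most 3. -/
def IsCoplanarSet (F : Type*) [Field F] (S : Set (Projectivization F (Fin 4 → F))) : Prop :=
  Module.finrank F (Submodule.span F (Projectivization.rep '' S)) ≤ 3

/-- A strong realization in `ℙ³(F)` of a configuration on the point set `Fin n` with
collection `L` of full lines and collection `H` of full planes is an injective map
`σ : Fin n → ℙ³(F)` such that a 3-element subset `T` maps to a collinear set exactly when
`T` is contained in a member of `L`, and a 4-element subset `S` maps to a coplanar set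
exactly when `S` is contained in a member of `H`. -/
def IsStrongRealization (F : Type*) [Field F] {n : ℕ} (L H : Finset (Finset (Fin n)))
    (σ : Fin n → Projectivization F (Fin 4 → F)) : Prop :=
  Function.Injective σ ∧
    (∀ T : Finset (Fin n), T.card = 3 →
      (IsCollinearSet F (σ '' ↑T) ↔ ∃ l ∈ L, T ⊆ l)) ∧
    (∀ S : Finset (Fin n), S.card = 4 →
      (IsCoplanarSet F (σ '' ↑S) ↔ ∃ h ∈ H, S ⊆ h))

/-!
A strong realization consists of three distinct points on a line `ℓ₁` and three distinct points
on a line `ℓ₂` skew to it. Conversely, skew lines of `ℙ³` are complementary, so in such a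
configuration the rank of the image of an index set `T` is
`min |T ∩ {0,1,2}| 2 + min |T ∩ {3,4,5}| 2`, which reproduces exactly the prescribed
collinearities and coplanarities. Choosing the points one at a time (`σ 0`, `σ 1 ≠ σ 0`, `σ 2`
on `ℓ₁`, `σ 3` off `ℓ₁`, `σ 4` off the plane `ℓ₁ σ 3`, `σ 5` on `ℓ₂ = σ 3 σ 4`) gives
`(q³+q²+q+1)(q³+q²+q)(q-1)(q³+q²)q³(q-1)` of them.
-/

open Module Submodule
open scoped LinearAlgebra.Projectivization

lemma Nat.card_subtype_not {α : Type*} [Finite α] (P : α → Prop) :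
    Nat.card {x // ¬ P x} = Nat.card α - Nat.card {x // P x} := by
  classical
  have := Fintype.ofFinite α
  simp only [Nat.card_eq_fintype_card]
  exact Fintype.card_subtype_compl P

lemma Nat.card_subtype_ne {α : Type*} [Finite α] (a : α) :
    Nat.card {x // x ≠ a} = Nat.card α - 1 := by
  rw [Nat.card_subtype_not (· = a), show Nat.card {x // x = a} = 1 from Nat.card_unique]

lemma Nat.card_subtype_and_ne_and_ne {α : Type*} [Finite α] {P : α → Prop} {a b : α}
    (ha : P a) (hb : P b) (hab : a ≠ b) :
    Nat.card {x // P x ∧ x ≠ a ∧ x ≠ b} = Nat.card {x // P x} - 2 := by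
  have hsub : ({a, b} : Set α) ⊆ {x | P x} := Set.insert_subset ha (Set.singleton_subset_iff.2 hb)
  have hset : {x | P x ∧ x ≠ a ∧ x ≠ b} = {x | P x} \ {a, b} := by
    ext x
    simp
  calc Nat.card {x // P x ∧ x ≠ a ∧ x ≠ b} = ({x | P x} \ {a, b}).ncard := by rw [← hset]; rfl
    _ = Nat.card {x // P x} - 2 := by rw [Set.ncard_sdiff hsub, Set.ncard_pair hab]; rfl

lemma Nat.card_sigma_of_card_eq {α : Type*} [Finite α] {β : α → Type*} [∀ a, Finite (β a)]
    {c : ℕ} (h : ∀ a, Nat.card (β a) = c) : Nat.card (Σ a, β a) = Nat.card α * c := by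
  have := Fintype.ofFinite α
  rw [Nat.card_sigma, Finset.sum_congr rfl fun a _ => h a, Finset.sum_const, Finset.card_univ,
    smul_eq_mul, Nat.card_eq_fintype_card]

namespace Projectivization

variable {F V : Type*} [Field F] [AddCommGroup V] [Module F V]

lemma finrank_span_rep_pair {x y : ℙ F V} (hxy : x ≠ y) :
    finrank F (span F {x.rep, y.rep}) = 2 := by
  have hrep : x.rep ≠ y.rep := fun h => hxy (by rw [← x.mk_rep, ← y.mk_rep]; simp only [h])
  classical
  rw [finrank_span_set_eq_card (linearIndepOn_pair x y), Set.toFinset_insert,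
    Set.toFinset_singleton, Finset.card_pair hrep]

lemma finrank_span_rep_image_le {S : Set (ℙ F V)} {W : Submodule F V} [FiniteDimensional F W]
    (h : ∀ p ∈ S, p.rep ∈ W) : finrank F (span F (Projectivization.rep '' S)) ≤ finrank F W :=
  finrank_mono (span_le.2 (Set.image_subset_iff.2 h))

lemma range_map_subtype (W : Submodule F V) :
    Set.range (map W.subtype W.injective_subtype) = {p | p.rep ∈ W} := by
  ext p
  constructor
  · rintro ⟨x, rfl⟩
    induction x using ind with
    | h v hv =>
      obtain ⟨a, ha⟩ := exists_smul_eq_mk_rep F (W.subtype v)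
        (by simpa using fun h => hv (Subtype.ext h))
      rw [map_mk, Set.mem_ofPred_eq, ← ha]
      exact W.smul_mem _ v.2
  · intro hp
    refine ⟨mk F (⟨p.rep, hp⟩ : W) fun h => p.rep_nonzero (congrArg Subtype.val h), ?_⟩
    rw [map_mk]
    exact p.mk_rep

section FiniteDimensional

variable [FiniteDimensional F V]

lemma finrank_span_rep_image_union {W₁ W₂ : Submodule F V} (hW : Disjoint W₁ W₂)
    {S₁ S₂ : Set (ℙ F V)} (hS₁ : ∀ p ∈ S₁, p.rep ∈ W₁) (hS₂ : ∀ p ∈ S₂, p.rep ∈ W₂) :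
    finrank F (span F (Projectivization.rep '' (S₁ ∪ S₂))) =
      finrank F (span F (Projectivization.rep '' S₁)) +
        finrank F (span F (Projectivization.rep '' S₂)) := by
  have hinf : span F (Projectivization.rep '' S₁) ⊓ span F (Projectivization.rep '' S₂) = ⊥ :=
    (hW.mono (span_le.2 (Set.image_subset_iff.2 hS₁))
      (span_le.2 (Set.image_subset_iff.2 hS₂))).eq_bot
  rw [Set.image_union, span_union, ← finrank_sup_add_finrank_inf_eq, hinf, finrank_bot, add_zero]

lemma span_rep_pair_eq {x y : ℙ F V} {W : Submodule F V} (hW : finrank F W ≤ 2)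
    (hx : x.rep ∈ W) (hy : y.rep ∈ W) (hxy : x ≠ y) : span F {x.rep, y.rep} = W :=
  eq_of_le_of_finrank_le (span_le.2 (Set.insert_subset hx (Set.singleton_subset_iff.2 hy)))
    (hW.trans (finrank_span_rep_pair hxy).ge)

lemma rep_mem_span_rep_pair {S : Set (ℙ F V)}
    (hS : finrank F (span F (Projectivization.rep '' S)) ≤ 2) {x y z : ℙ F V}
    (hx : x ∈ S) (hy : y ∈ S) (hz : z ∈ S) (hxy : x ≠ y) : z.rep ∈ span F {x.rep, y.rep} := by
  rw [span_rep_pair_eq hS (subset_span ⟨x, hx, rfl⟩) (subset_span ⟨y, hy, rfl⟩) hxy]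
  exact subset_span ⟨z, hz, rfl⟩

lemma finrank_span_rep_image_of_finrank_eq_two {W : Submodule F V} (hW : finrank F W = 2)
    {U : Finset (ℙ F V)} (hU : ∀ p ∈ U, p.rep ∈ W) :
    finrank F (span F (Projectivization.rep '' (U : Set (ℙ F V)))) = min U.card 2 := by
  rcases Nat.lt_or_ge U.card 2 with hU2 | hU2
  · interval_cases h : U.card
    · simp [Finset.card_eq_zero.1 h]
    · obtain ⟨x, rfl⟩ := Finset.card_eq_one.1 h
      rw [Finset.coe_singleton, Set.image_singleton, finrank_span_singleton x.rep_nonzero]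
      rfl
  · obtain ⟨x, hx, y, hy, hxy⟩ := Finset.one_lt_card.1 hU2
    rw [min_eq_right hU2]
    refine le_antisymm (hW ▸ finrank_span_rep_image_le hU) ?_
    rw [← finrank_span_rep_pair hxy]
    exact finrank_mono (span_mono (Set.insert_subset ⟨x, hx, rfl⟩
      (Set.singleton_subset_iff.2 ⟨y, hy, rfl⟩)))

end FiniteDimensional

section Finite

variable [Finite F]

lemma card_rep_mem_of_finrank {W : Submodule F V} {n : ℕ} (hW : finrank F W = n) :
    Nat.card {p : ℙ F V // p.rep ∈ W} = ∑ i ∈ Finset.range n, Nat.card F ^ i := by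
  rw [← card_of_finrank F W hW, ← Nat.card_range_of_injective (map_injective _ W.injective_subtype),
    range_map_subtype]
  rfl

variable [Finite V]

lemma card_rep_not_mem_of_finrank {W : Submodule F V} {m n : ℕ} (hV : finrank F V = m)
    (hW : finrank F W = n) :
    Nat.card {p : ℙ F V // p.rep ∉ W} =
      ∑ i ∈ Finset.range m, Nat.card F ^ i - ∑ i ∈ Finset.range n, Nat.card F ^ i := by
  rw [Nat.card_subtype_not, card_of_finrank F V hV, card_rep_mem_of_finrank hW]

lemma card_rep_mem_span_pair_diff {x y : ℙ F V} (hxy : x ≠ y) :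
    Nat.card {p : ℙ F V // p.rep ∈ span F {x.rep, y.rep} ∧ p ≠ x ∧ p ≠ y} = Nat.card F - 1 := by
  rw [Nat.card_subtype_and_ne_and_ne (P := fun p : ℙ F V => p.rep ∈ span F {x.rep, y.rep})
      (subset_span (by simp)) (subset_span (by simp)) hxy,
    card_rep_mem_of_finrank (finrank_span_rep_pair hxy)]
  simp only [Finset.sum_range_succ, Finset.sum_range_zero, pow_zero, pow_one]
  omega

end Finite

end Projectivization

open Projectivization

namespace SkewLines

variable {F V : Type*} [Field F] [AddCommGroup V] [Module F V]

def IsChain (σ : Fin 6 → ℙ F V) : Prop :=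
  σ 1 ≠ σ 0 ∧
  ((σ 2).rep ∈ span F {(σ 0).rep, (σ 1).rep} ∧ σ 2 ≠ σ 0 ∧ σ 2 ≠ σ 1) ∧
  (σ 3).rep ∉ span F {(σ 0).rep, (σ 1).rep} ∧
  (σ 4).rep ∉ span F {(σ 0).rep, (σ 1).rep} ⊔ F ∙ (σ 3).rep ∧
  ((σ 5).rep ∈ span F {(σ 3).rep, (σ 4).rep} ∧ σ 5 ≠ σ 3 ∧ σ 5 ≠ σ 4)

def configRank (T : Finset (Fin 6)) : ℕ :=
  min (T ∩ {0, 1, 2}).card 2 + min (T ∩ {3, 4, 5}).card 2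

namespace IsChain

variable {σ : Fin 6 → ℙ F V} (h : IsChain σ)
include h

lemma three_ne_four : σ 3 ≠ σ 4 := fun h34 =>
  h.2.2.2.1 (h34 ▸ mem_sup_right (mem_span_singleton_self _))

lemma rep_mem_first_line : ∀ i ∈ ({0, 1, 2} : Finset (Fin 6)),
    (σ i).rep ∈ span F {(σ 0).rep, (σ 1).rep} := by
  simp only [Finset.mem_insert, Finset.mem_singleton, forall_eq_or_imp, forall_eq]
  exact ⟨subset_span (by simp), subset_span (by simp), h.2.1.1⟩

lemma rep_mem_second_line : ∀ i ∈ ({3, 4, 5} : Finset (Fin 6)),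
    (σ i).rep ∈ span F {(σ 3).rep, (σ 4).rep} := by
  simp only [Finset.mem_insert, Finset.mem_singleton, forall_eq_or_imp, forall_eq]
  exact ⟨subset_span (by simp), subset_span (by simp), h.2.2.2.2.1⟩

variable [FiniteDimensional F V]

lemma disjoint_lines (hV : finrank F V = 4) :
    Disjoint (span F {(σ 0).rep, (σ 1).rep}) (span F {(σ 3).rep, (σ 4).rep}) := by
  set W₁ := span F {(σ 0).rep, (σ 1).rep}
  set W₂ := span F {(σ 3).rep, (σ 4).rep}
  have hW₁ : finrank F W₁ = 2 := finrank_span_rep_pair h.1.symm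
  have hW₂ : finrank F W₂ = 2 := finrank_span_rep_pair h.three_ne_four
  have hsup : W₁ ⊔ W₂ = ⊤ := by
    apply eq_top_of_finrank_eq
    refine le_antisymm (finrank_le _) ?_
    calc finrank F V = finrank F ↥(W₁ ⊔ F ∙ (σ 3).rep ⊔ F ∙ (σ 4).rep) := by
          rw [finrank_sup_span_singleton h.2.2.2.1, finrank_sup_span_singleton h.2.2.1, hW₁, hV]
      _ ≤ finrank F ↥(W₁ ⊔ W₂) := by
          rw [sup_assoc, ← span_union, Set.singleton_union]
  have := finrank_sup_add_finrank_inf_eq W₁ W₂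
  rw [hsup, finrank_top, hV, hW₁, hW₂] at this
  exact disjoint_iff.2 (finrank_eq_zero.1 (by omega))

lemma injective (hV : finrank F V = 4) : Function.Injective σ := by
  have cross : ∀ i ∈ ({0, 1, 2} : Finset (Fin 6)), ∀ j ∈ ({3, 4, 5} : Finset (Fin 6)),
      σ i ≠ σ j := fun i hi j hj hij =>
    (σ i).rep_nonzero ((disjoint_iff_inf_le.1 (h.disjoint_lines hV))
      ⟨h.rep_mem_first_line i hi, hij ▸ h.rep_mem_second_line j hj⟩)
  have h34 := h.three_ne_four
  obtain ⟨h10, ⟨-, h20, h21⟩, -, -, -, h53, h54⟩ := h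
  intro i j hij
  fin_cases i <;> fin_cases j <;> first
    | rfl
    | exact absurd hij ‹_›
    | exact absurd hij.symm ‹_›
    | exact absurd hij (cross _ (by decide) _ (by decide))
    | exact absurd hij.symm (cross _ (by decide) _ (by decide))

lemma finrank_span_image (hV : finrank F V = 4) (T : Finset (Fin 6)) :
    finrank F (span F (Projectivization.rep '' (σ '' T))) = configRank T := by
  classical
  have hT : σ '' T = ((T ∩ {0, 1, 2}).image σ : Set (ℙ F V)) ∪ ((T ∩ {3, 4, 5}).image σ) := by
    rw [Finset.coe_image, Finset.coe_image, ← Set.image_union, ← Finset.coe_union,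
      ← Finset.inter_union_distrib_left]
    congr 2
    ext i
    fin_cases i <;> simp
  have mem₁ : ∀ p ∈ (T ∩ {0, 1, 2}).image σ, p.rep ∈ span F {(σ 0).rep, (σ 1).rep} := by
    simp only [Finset.mem_image, Finset.mem_inter, forall_exists_index, and_imp]
    rintro _ i - hi rfl
    exact h.rep_mem_first_line i hi
  have mem₂ : ∀ p ∈ (T ∩ {3, 4, 5}).image σ, p.rep ∈ span F {(σ 3).rep, (σ 4).rep} := by
    simp only [Finset.mem_image, Finset.mem_inter, forall_exists_index, and_imp]
    rintro _ i - hi rfl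
    exact h.rep_mem_second_line i hi
  rw [hT, finrank_span_rep_image_union (h.disjoint_lines hV) mem₁ mem₂,
    finrank_span_rep_image_of_finrank_eq_two (finrank_span_rep_pair h.1.symm) mem₁,
    finrank_span_rep_image_of_finrank_eq_two (finrank_span_rep_pair h.three_ne_four) mem₂,
    Finset.card_image_of_injective _ (h.injective hV),
    Finset.card_image_of_injective _ (h.injective hV), configRank]

end IsChain

variable {F : Type*} [Field F]

abbrev configLines : Finset (Finset (Fin 6)) := {{0, 1, 2}, {3, 4, 5}}

abbrev configPlanes : Finset (Finset (Fin 6)) :=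
  {{0, 1, 2, 3}, {0, 1, 2, 4}, {0, 1, 2, 5}, {0, 3, 4, 5}, {1, 3, 4, 5}, {2, 3, 4, 5}}

lemma configRank_le_two_iff :
    ∀ T : Finset (Fin 6), T.card = 3 → (configRank T ≤ 2 ↔ ∃ l ∈ configLines, T ⊆ l) := by
  decide

lemma configRank_le_three_iff :
    ∀ S : Finset (Fin 6), S.card = 4 → (configRank S ≤ 3 ↔ ∃ h ∈ configPlanes, S ⊆ h) := by
  decide

theorem IsChain.isStrongRealization {σ : Fin 6 → ℙ F (Fin 4 → F)} (h : IsChain σ) :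
    IsStrongRealization F configLines configPlanes σ := by
  have hV : finrank F (Fin 4 → F) = 4 := finrank_fin_fun F
  refine ⟨h.injective hV, fun T hT => ?_, fun S hS => ?_⟩
  · rw [IsCollinearSet, h.finrank_span_image hV]
    exact configRank_le_two_iff T hT
  · rw [IsCoplanarSet, h.finrank_span_image hV]
    exact configRank_le_three_iff S hS

theorem IsStrongRealization.isChain {σ : Fin 6 → ℙ F (Fin 4 → F)}
    (h : IsStrongRealization F configLines configPlanes σ) : IsChain σ := by
  obtain ⟨hinj, hcol, hcop⟩ := h
  have h10 : σ 1 ≠ σ 0 := hinj.ne (by decide)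
  have hW : finrank F (span F {(σ 0).rep, (σ 1).rep}) = 2 := finrank_span_rep_pair h10.symm
  have h012 : (σ 2).rep ∈ span F {(σ 0).rep, (σ 1).rep} :=
    rep_mem_span_rep_pair ((hcol {0, 1, 2} rfl).2 ⟨_, by decide, le_rfl⟩)
      (Set.mem_image_of_mem σ (by simp)) (Set.mem_image_of_mem σ (by simp))
      (Set.mem_image_of_mem σ (by simp)) h10.symm
  have h345 : (σ 5).rep ∈ span F {(σ 3).rep, (σ 4).rep} :=
    rep_mem_span_rep_pair ((hcol {3, 4, 5} rfl).2 ⟨_, by decide, le_rfl⟩)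
      (Set.mem_image_of_mem σ (by simp)) (Set.mem_image_of_mem σ (by simp))
      (Set.mem_image_of_mem σ (by simp)) (hinj.ne (by decide))
  have h3 : (σ 3).rep ∉ span F {(σ 0).rep, (σ 1).rep} := by
    intro h3
    have hcol013 : IsCollinearSet F (σ '' ↑({0, 1, 3} : Finset (Fin 6))) := by
      refine (finrank_span_rep_image_le (Set.forall_mem_image.2 ?_)).trans hW.le
      simp only [Finset.coe_insert, Finset.coe_singleton, Set.mem_insert_iff,
        Set.mem_singleton_iff, forall_eq_or_imp, forall_eq]
      exact ⟨subset_span (by simp), subset_span (by simp), h3⟩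
    exact absurd ((hcol {0, 1, 3} rfl).1 hcol013) (by decide)
  have h4 : (σ 4).rep ∉ span F {(σ 0).rep, (σ 1).rep} ⊔ F ∙ (σ 3).rep := by
    intro h4
    have hcop0134 : IsCoplanarSet F (σ '' ↑({0, 1, 3, 4} : Finset (Fin 6))) := by
      refine (finrank_span_rep_image_le (Set.forall_mem_image.2 ?_)).trans
        (by rw [finrank_sup_span_singleton h3, hW])
      simp only [Finset.coe_insert, Finset.coe_singleton, Set.mem_insert_iff,
        Set.mem_singleton_iff, forall_eq_or_imp, forall_eq]
      exact ⟨mem_sup_left (subset_span (by simp)), mem_sup_left (subset_span (by simp)),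
        mem_sup_right (mem_span_singleton_self _), h4⟩
    exact absurd ((hcop {0, 1, 3, 4} rfl).1 hcop0134) (by decide)
  exact ⟨h10, ⟨h012, hinj.ne (by decide), hinj.ne (by decide)⟩, h3, h4,
    h345, hinj.ne (by decide), hinj.ne (by decide)⟩

theorem isStrongRealization_iff_isChain {σ : Fin 6 → ℙ F (Fin 4 → F)} :
    IsStrongRealization F configLines configPlanes σ ↔ IsChain σ :=
  ⟨IsStrongRealization.isChain, IsChain.isStrongRealization⟩

section Counting

variable (F V : Type*) [Field F] [AddCommGroup V] [Module F V]

def Chain : Type _ :=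
  Σ (p₀ : ℙ F V) (p₁ : {p : ℙ F V // p ≠ p₀})
    (_ : {p : ℙ F V // p.rep ∈ span F {p₀.rep, p₁.1.rep} ∧ p ≠ p₀ ∧ p ≠ p₁.1})
    (p₃ : {p : ℙ F V // p.rep ∉ span F {p₀.rep, p₁.1.rep}})
    (p₄ : {p : ℙ F V // p.rep ∉ span F {p₀.rep, p₁.1.rep} ⊔ F ∙ p₃.1.rep}),
    {p : ℙ F V // p.rep ∈ span F {p₃.1.rep, p₄.1.rep} ∧ p ≠ p₃.1 ∧ p ≠ p₄.1}

def isChainEquiv : {σ : Fin 6 → ℙ F V // IsChain σ} ≃ Chain F V where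
  toFun σ := ⟨σ.1 0, ⟨σ.1 1, σ.2.1⟩, ⟨σ.1 2, σ.2.2.1⟩, ⟨σ.1 3, σ.2.2.2.1⟩, ⟨σ.1 4, σ.2.2.2.2.1⟩,
    ⟨σ.1 5, σ.2.2.2.2.2⟩⟩
  invFun := fun ⟨p₀, p₁, p₂, p₃, p₄, p₅⟩ =>
    ⟨![p₀, p₁.1, p₂.1, p₃.1, p₄.1, p₅.1], ⟨p₁.2, p₂.2, p₃.2, p₄.2, p₅.2⟩⟩
  left_inv σ := Subtype.ext (funext fun i => by fin_cases i <;> rfl)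
  right_inv _ := rfl

variable [Finite F] [Finite V]

lemma card_chain (hV : finrank F V = 4) :
    Nat.card (Chain F V) =
      (Nat.card F ^ 3 + Nat.card F ^ 2 + Nat.card F + 1) *
        ((Nat.card F ^ 3 + Nat.card F ^ 2 + Nat.card F) *
          ((Nat.card F - 1) *
            ((Nat.card F ^ 3 + Nat.card F ^ 2) * (Nat.card F ^ 3 * (Nat.card F - 1))))) := by
  obtain ⟨sum_range_two, sum_range_three, sum_range_four⟩ :
      ∑ i ∈ Finset.range 2, Nat.card F ^ i = Nat.card F + 1 ∧
      ∑ i ∈ Finset.range 3, Nat.card F ^ i = Nat.card F ^ 2 + Nat.card F + 1 ∧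
      ∑ i ∈ Finset.range 4, Nat.card F ^ i =
        Nat.card F ^ 3 + Nat.card F ^ 2 + Nat.card F + 1 := by
    refine ⟨?_, ?_, ?_⟩ <;>
      simp only [Finset.sum_range_succ, Finset.sum_range_zero, pow_zero, pow_one] <;> ring
  rw [← sum_range_four, ← card_of_finrank F V hV]
  refine Nat.card_sigma_of_card_eq fun p₀ => ?_
  refine (Nat.card_sigma_of_card_eq fun p₁ => ?_).trans
    (by rw [Nat.card_subtype_ne, card_of_finrank F V hV, sum_range_four, Nat.add_sub_cancel])
  have hW₁ := finrank_span_rep_pair (Ne.symm p₁.2)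
  refine (Nat.card_sigma_of_card_eq fun _ => ?_).trans
    (by rw [card_rep_mem_span_pair_diff (Ne.symm p₁.2)])
  refine (Nat.card_sigma_of_card_eq fun p₃ => ?_).trans
    (by rw [card_rep_not_mem_of_finrank hV hW₁, sum_range_four, sum_range_two]; congr 1; omega)
  have hE := finrank_sup_span_singleton p₃.2
  rw [hW₁] at hE
  refine (Nat.card_sigma_of_card_eq fun p₄ => ?_).trans
    (by rw [card_rep_not_mem_of_finrank hV hE, sum_range_four, sum_range_three]; congr 1; omega)
  exact card_rep_mem_span_pair_diff fun h34 =>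
    p₄.2 (by rw [← h34]; exact mem_sup_right (mem_span_singleton_self _))

end Counting

end SkewLines

/-- The number of strong realizations in `ℙ³(𝔽_q)` of the 6-point configuration with full
lines `{{0,1,2},{3,4,5}}` and full planes
`{{0,1,2,3},{0,1,2,4},{0,1,2,5},{0,3,4,5},{1,3,4,5},{2,3,4,5}}` is
`A₆(4,q) = (q²+q+1)(q²+1)(q+1)²(q−1)²q⁶`. -/
theorem count_strong_realizations_A6 (q : ℕ) (F : Type*) [Field F] [Fintype F]
    (hq : Fintype.card F = q) :
    (Nat.card {σ : Fin 6 → Projectivization F (Fin 4 → F) //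
        IsStrongRealization F
          ({{0, 1, 2}, {3, 4, 5}} : Finset (Finset (Fin 6)))
          ({{0, 1, 2, 3}, {0, 1, 2, 4}, {0, 1, 2, 5},
            {0, 3, 4, 5}, {1, 3, 4, 5}, {2, 3, 4, 5}} : Finset (Finset (Fin 6))) σ} : ℤ) =
      ((q : ℤ) ^ 2 + q + 1) * ((q : ℤ) ^ 2 + 1) * ((q : ℤ) + 1) ^ 2 * ((q : ℤ) - 1) ^ 2 *
        (q : ℤ) ^ 6 := by
  have e : {σ // IsStrongRealization F SkewLines.configLines SkewLines.configPlanes σ} ≃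
      SkewLines.Chain F (Fin 4 → F) :=
    (Equiv.subtypeEquivRight fun _ => SkewLines.isStrongRealization_iff_isChain).trans
      (SkewLines.isChainEquiv _ _)
  rw [Nat.card_congr e, SkewLines.card_chain F _ (finrank_fin_fun F), Nat.card_eq_fintype_card,
    hq]
  have hq1 : 1 ≤ q := hq ▸ Fintype.card_pos
  push_cast [Nat.cast_sub hq1]
  ring
end

section
/- The number of strong realizations in ℙ³(𝔽_q) of the 7-point configuration h₄ with full lines 𝓛 = {{0,1,2},{0,3,4}} and full planes 𝓗 = {{0,1,2,3,4},{0,1,2,5},{0,1,2,6},{0,3,4,5},{0,3,4,6},{1,3,5,6},{2,4,5,6}} is A_{h₄}(4,q) = |PGL₄(𝔽_q)| = q⁶(q⁴−1)(q³−1)(q²−1). -/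
set_option maxHeartbeats 1000000

section H4section
namespace H4
open Submodule Module Projectivization
variable {F : Type*} [Field F]

abbrev L₀ : Finset (Finset (Fin 7)) := {{0, 1, 2}, {0, 3, 4}}
abbrev H₀ : Finset (Finset (Fin 7)) :=
  {{0, 1, 2, 3, 4}, {0, 1, 2, 5}, {0, 1, 2, 6}, {0, 3, 4, 5}, {0, 3, 4, 6}, {1, 3, 5, 6}, {2, 4, 5, 6}}

def w (F : Type*) [Field F] : Fin 7 → (Fin 4 → F) :=
  ![![1,0,0,0], ![0,1,0,0], ![1,1,0,0], ![0,0,1,0], ![1,0,1,0], ![0,0,0,1], ![0,1,-1,1]]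
lemma w0 : w F 0 = ![1,0,0,0] := rfl
lemma w1 : w F 1 = ![0,1,0,0] := rfl
lemma w2 : w F 2 = ![1,1,0,0] := rfl
lemma w3 : w F 3 = ![0,0,1,0] := rfl
lemma w4 : w F 4 = ![1,0,1,0] := rfl
lemma w5 : w F 5 = ![0,0,0,1] := rfl
lemma w6 : w F 6 = ![0,1,-1,1] := rfl

lemma rel2 : w F 2 = w F 0 + w F 1 := by
  funext j; fin_cases j <;> norm_num [w0, w1, w2]
lemma rel4 : w F 4 = w F 0 + w F 3 := by
  funext j; fin_cases j <;> norm_num [w0, w3, w4]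
lemma rel4' : w F 4 = w F 2 - w F 1 + w F 3 := by
  funext j; fin_cases j <;> norm_num [w1, w2, w3, w4]
lemma rel6 : w F 6 = w F 1 - w F 3 + w F 5 := by
  funext j; fin_cases j <;> norm_num [w1, w3, w5, w6]
lemma rel6' : w F 6 = w F 2 - w F 4 + w F 5 := by
  funext j; fin_cases j <;> norm_num [w2, w4, w5, w6]

theorem det4 (A : Matrix (Fin 4) (Fin 4) F) : A.det =
    A 0 0 * (A 1 1 * (A 2 2 * A 3 3 - A 2 3 * A 3 2) - A 1 2 * (A 2 1 * A 3 3 - A 2 3 * A 3 1) + A 1 3 * (A 2 1 * A 3 2 - A 2 2 * A 3 1))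
  - A 0 1 * (A 1 0 * (A 2 2 * A 3 3 - A 2 3 * A 3 2) - A 1 2 * (A 2 0 * A 3 3 - A 2 3 * A 3 0) + A 1 3 * (A 2 0 * A 3 2 - A 2 2 * A 3 0))
  + A 0 2 * (A 1 0 * (A 2 1 * A 3 3 - A 2 3 * A 3 1) - A 1 1 * (A 2 0 * A 3 3 - A 2 3 * A 3 0) + A 1 3 * (A 2 0 * A 3 1 - A 2 1 * A 3 0))
  - A 0 3 * (A 1 0 * (A 2 1 * A 3 2 - A 2 2 * A 3 1) - A 1 1 * (A 2 0 * A 3 2 - A 2 2 * A 3 0) + A 1 2 * (A 2 0 * A 3 1 - A 2 1 * A 3 0)) := by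
  simp [Matrix.det_succ_row_zero, Fin.sum_univ_succ, Matrix.det_fin_three, Fin.succAbove,
    Fin.ext_iff,
    show Fin.succ (2 : Fin 3) = (3 : Fin 4) from rfl, show Fin.castSucc (2 : Fin 3) = (2 : Fin 4) from rfl]
  ring

theorem indep3 (x y z : Fin 4 → F) (c : Fin 3 → Fin 4)
    (h : Matrix.det (Matrix.of fun i j => ![x, y, z] i (c j)) = 1 ∨
         Matrix.det (Matrix.of fun i j => ![x, y, z] i (c j)) = -1) :
    LinearIndependent F ![x, y, z] := by
  have hu : IsUnit (Matrix.of fun i j => ![x, y, z] i (c j)).det := by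
    rcases h with h | h <;> rw [h]
    exacts [isUnit_one, isUnit_one.neg]
  have h2 : LinearIndependent F (fun i => (Matrix.of fun i j => ![x, y, z] i (c j)) i) :=
    Matrix.linearIndependent_rows_iff_isUnit.2 ((Matrix.isUnit_iff_isUnit_det _).2 hu)
  exact LinearIndependent.of_comp (LinearMap.funLeft F F c) h2

theorem indep4 (x y z t : Fin 4 → F)
    (h : Matrix.det (Matrix.of ![x, y, z, t]) = 1 ∨ Matrix.det (Matrix.of ![x, y, z, t]) = -1) :
    LinearIndependent F ![x, y, z, t] := by
  have hu : IsUnit (Matrix.of ![x, y, z, t]).det := by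
    rcases h with h | h <;> rw [h]
    exacts [isUnit_one, isUnit_one.neg]
  exact Matrix.linearIndependent_rows_iff_isUnit.2 ((Matrix.isUnit_iff_isUnit_det _).2 hu)

lemma range3_eq (x y z : Fin 4 → F) : Set.range ![x, y, z] = {x, y, z} := by
  simp only [Matrix.range_cons, Matrix.range_empty, Set.union_empty, Set.union_singleton]
  ext u; simp; tauto

lemma range4_eq (x y z t : Fin 4 → F) : Set.range ![x, y, z, t] = {x, y, z, t} := by
  simp only [Matrix.range_cons, Matrix.range_empty, Set.union_empty, Set.union_singleton]
  ext u; simp; tauto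

lemma finrank_span_pair_le (x y : Fin 4 → F) : finrank F (span F {x, y}) ≤ 2 := by
  classical
  refine (finrank_span_le_card _).trans ?_
  rw [Set.toFinset_insert, Set.toFinset_singleton]
  exact (Finset.card_insert_le _ _).trans (by simp)

lemma finrank_span_triple_le (x y z : Fin 4 → F) : finrank F (span F {x, y, z}) ≤ 3 := by
  classical
  refine (finrank_span_le_card _).trans ?_
  rw [Set.toFinset_insert, Set.toFinset_insert, Set.toFinset_singleton]
  have h1 : (insert y ({z} : Finset _)).card ≤ 2 := (Finset.card_insert_le _ _).trans (by simp)
  have h2 := Finset.card_insert_le x (insert y ({z} : Finset _))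
  omega

lemma rank_le_two_of_subset {S : Set (Fin 4 → F)} (x y : Fin 4 → F)
    (h : S ⊆ ↑(span F {x, y})) : finrank F (span F S) ≤ 2 :=
  le_trans (Submodule.finrank_mono (span_le.2 h)) (finrank_span_pair_le x y)

lemma rank_le_three_of_subset {S : Set (Fin 4 → F)} (x y z : Fin 4 → F)
    (h : S ⊆ ↑(span F {x, y, z})) : finrank F (span F S) ≤ 3 :=
  le_trans (Submodule.finrank_mono (span_le.2 h)) (finrank_span_triple_le x y z)

lemma finrank_span_triple_eq (x y z : Fin 4 → F) (h : LinearIndependent F ![x, y, z]) :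
    finrank F (span F {x, y, z}) = 3 := by
  rw [← range3_eq, finrank_span_eq_card h]; simp

lemma finrank_span_quad_eq (x y z t : Fin 4 → F) (h : LinearIndependent F ![x, y, z, t]) :
    finrank F (span F {x, y, z, t}) = 4 := by
  rw [← range4_eq, finrank_span_eq_card h]; simp

lemma tri_col (T : Finset (Fin 7)) (hL : ∃ l ∈ L₀, T ⊆ l) (x y : Fin 4 → F)
    (h : ∀ i ∈ T, w F i ∈ span F {x, y}) :
    finrank F (span F (w F '' ↑T)) ≤ 2 ↔ ∃ l ∈ L₀, T ⊆ l := by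
  refine iff_of_true (rank_le_two_of_subset x y ?_) hL
  rintro u ⟨i, hi, rfl⟩
  exact h i hi

lemma quad_cop (T : Finset (Fin 7)) (hH : ∃ h ∈ H₀, T ⊆ h) (x y z : Fin 4 → F)
    (h : ∀ i ∈ T, w F i ∈ span F {x, y, z}) :
    finrank F (span F (w F '' ↑T)) ≤ 3 ↔ ∃ h ∈ H₀, T ⊆ h := by
  refine iff_of_true (rank_le_three_of_subset x y z ?_) hH
  rintro u ⟨i, hi, rfl⟩
  exact h i hi

lemma tri_noncol (T : Finset (Fin 7)) (hL : ¬ ∃ l ∈ L₀, T ⊆ l) (a b c : Fin 7)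
    (ha : a ∈ T) (hb : b ∈ T) (hc : c ∈ T)
    (h : LinearIndependent F ![w F a, w F b, w F c]) :
    finrank F (span F (w F '' ↑T)) ≤ 2 ↔ ∃ l ∈ L₀, T ⊆ l := by
  refine iff_of_false (fun hle => ?_) hL
  have h3 : finrank F (span F {w F a, w F b, w F c}) = 3 := finrank_span_triple_eq _ _ _ h
  have hsub : ({w F a, w F b, w F c} : Set (Fin 4 → F)) ⊆ w F '' ↑T := by
    rintro u (rfl | rfl | rfl)
    exacts [⟨a, ha, rfl⟩, ⟨b, hb, rfl⟩, ⟨c, hc, rfl⟩]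
  have h5 : finrank F (span F ({w F a, w F b, w F c} : Set (Fin 4 → F)))
      ≤ finrank F (span F (w F '' ↑T)) := Submodule.finrank_mono (span_mono hsub)
  omega

lemma quad_noncop (T : Finset (Fin 7)) (hH : ¬ ∃ h ∈ H₀, T ⊆ h) (a b c d : Fin 7)
    (ha : a ∈ T) (hb : b ∈ T) (hc : c ∈ T) (hd : d ∈ T)
    (h : LinearIndependent F ![w F a, w F b, w F c, w F d]) :
    finrank F (span F (w F '' ↑T)) ≤ 3 ↔ ∃ h ∈ H₀, T ⊆ h := by
  refine iff_of_false (fun hle => ?_) hH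
  have h4 : finrank F (span F {w F a, w F b, w F c, w F d}) = 4 := finrank_span_quad_eq _ _ _ _ h
  have hsub : ({w F a, w F b, w F c, w F d} : Set (Fin 4 → F)) ⊆ w F '' ↑T := by
    rintro u (rfl | rfl | rfl | rfl)
    exacts [⟨a, ha, rfl⟩, ⟨b, hb, rfl⟩, ⟨c, hc, rfl⟩, ⟨d, hd, rfl⟩]
  have h5 : finrank F (span F ({w F a, w F b, w F c, w F d} : Set (Fin 4 → F)))
      ≤ finrank F (span F (w F '' ↑T)) := Submodule.finrank_mono (span_mono hsub)
  omega

lemma t013 : LinearIndependent F ![w F 0, w F 1, w F 3] :=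
  indep3 _ _ _ ![0,1,2] (by simp [Matrix.det_fin_three, Matrix.vecHead, Matrix.vecTail, w0, w1, w3])

lemma t023 : LinearIndependent F ![w F 0, w F 2, w F 3] :=
  indep3 _ _ _ ![0,1,2] (by simp [Matrix.det_fin_three, Matrix.vecHead, Matrix.vecTail, w0, w2, w3])

lemma t123 : LinearIndependent F ![w F 1, w F 2, w F 3] :=
  indep3 _ _ _ ![0,1,2] (by simp [Matrix.det_fin_three, Matrix.vecHead, Matrix.vecTail, w1, w2, w3])

lemma t014 : LinearIndependent F ![w F 0, w F 1, w F 4] :=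
  indep3 _ _ _ ![0,1,2] (by simp [Matrix.det_fin_three, Matrix.vecHead, Matrix.vecTail, w0, w1, w4])

lemma t024 : LinearIndependent F ![w F 0, w F 2, w F 4] :=
  indep3 _ _ _ ![0,1,2] (by simp [Matrix.det_fin_three, Matrix.vecHead, Matrix.vecTail, w0, w2, w4])

lemma t124 : LinearIndependent F ![w F 1, w F 2, w F 4] :=
  indep3 _ _ _ ![0,1,2] (by simp [Matrix.det_fin_three, Matrix.vecHead, Matrix.vecTail, w1, w2, w4])

lemma t134 : LinearIndependent F ![w F 1, w F 3, w F 4] :=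
  indep3 _ _ _ ![0,1,2] (by simp [Matrix.det_fin_three, Matrix.vecHead, Matrix.vecTail, w1, w3, w4])

lemma t234 : LinearIndependent F ![w F 2, w F 3, w F 4] :=
  indep3 _ _ _ ![0,1,2] (by simp [Matrix.det_fin_three, Matrix.vecHead, Matrix.vecTail, w2, w3, w4])

lemma t015 : LinearIndependent F ![w F 0, w F 1, w F 5] :=
  indep3 _ _ _ ![0,1,3] (by simp [Matrix.det_fin_three, Matrix.vecHead, Matrix.vecTail, w0, w1, w5])

lemma t025 : LinearIndependent F ![w F 0, w F 2, w F 5] :=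
  indep3 _ _ _ ![0,1,3] (by simp [Matrix.det_fin_three, Matrix.vecHead, Matrix.vecTail, w0, w2, w5])

lemma t125 : LinearIndependent F ![w F 1, w F 2, w F 5] :=
  indep3 _ _ _ ![0,1,3] (by simp [Matrix.det_fin_three, Matrix.vecHead, Matrix.vecTail, w1, w2, w5])

lemma t035 : LinearIndependent F ![w F 0, w F 3, w F 5] :=
  indep3 _ _ _ ![0,2,3] (by simp [Matrix.det_fin_three, Matrix.vecHead, Matrix.vecTail, w0, w3, w5])

lemma t135 : LinearIndependent F ![w F 1, w F 3, w F 5] :=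
  indep3 _ _ _ ![1,2,3] (by simp [Matrix.det_fin_three, Matrix.vecHead, Matrix.vecTail, w1, w3, w5])

lemma t235 : LinearIndependent F ![w F 2, w F 3, w F 5] :=
  indep3 _ _ _ ![0,2,3] (by simp [Matrix.det_fin_three, Matrix.vecHead, Matrix.vecTail, w2, w3, w5])

lemma t045 : LinearIndependent F ![w F 0, w F 4, w F 5] :=
  indep3 _ _ _ ![0,2,3] (by simp [Matrix.det_fin_three, Matrix.vecHead, Matrix.vecTail, w0, w4, w5])

lemma t145 : LinearIndependent F ![w F 1, w F 4, w F 5] :=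
  indep3 _ _ _ ![0,1,3] (by simp [Matrix.det_fin_three, Matrix.vecHead, Matrix.vecTail, w1, w4, w5])

lemma t245 : LinearIndependent F ![w F 2, w F 4, w F 5] :=
  indep3 _ _ _ ![0,1,3] (by simp [Matrix.det_fin_three, Matrix.vecHead, Matrix.vecTail, w2, w4, w5])

lemma t345 : LinearIndependent F ![w F 3, w F 4, w F 5] :=
  indep3 _ _ _ ![0,2,3] (by simp [Matrix.det_fin_three, Matrix.vecHead, Matrix.vecTail, w3, w4, w5])

lemma t016 : LinearIndependent F ![w F 0, w F 1, w F 6] :=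
  indep3 _ _ _ ![0,1,2] (by simp [Matrix.det_fin_three, Matrix.vecHead, Matrix.vecTail, w0, w1, w6])

lemma t026 : LinearIndependent F ![w F 0, w F 2, w F 6] :=
  indep3 _ _ _ ![0,1,2] (by simp [Matrix.det_fin_three, Matrix.vecHead, Matrix.vecTail, w0, w2, w6])

lemma t126 : LinearIndependent F ![w F 1, w F 2, w F 6] :=
  indep3 _ _ _ ![0,1,2] (by simp [Matrix.det_fin_three, Matrix.vecHead, Matrix.vecTail, w1, w2, w6])

lemma t036 : LinearIndependent F ![w F 0, w F 3, w F 6] :=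
  indep3 _ _ _ ![0,1,2] (by simp [Matrix.det_fin_three, Matrix.vecHead, Matrix.vecTail, w0, w3, w6])

lemma t136 : LinearIndependent F ![w F 1, w F 3, w F 6] :=
  indep3 _ _ _ ![1,2,3] (by simp [Matrix.det_fin_three, Matrix.vecHead, Matrix.vecTail, w1, w3, w6])

lemma t236 : LinearIndependent F ![w F 2, w F 3, w F 6] :=
  indep3 _ _ _ ![0,1,2] (by simp [Matrix.det_fin_three, Matrix.vecHead, Matrix.vecTail, w2, w3, w6])

lemma t046 : LinearIndependent F ![w F 0, w F 4, w F 6] :=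
  indep3 _ _ _ ![0,1,2] (by simp [Matrix.det_fin_three, Matrix.vecHead, Matrix.vecTail, w0, w4, w6])

lemma t146 : LinearIndependent F ![w F 1, w F 4, w F 6] :=
  indep3 _ _ _ ![0,1,2] (by simp [Matrix.det_fin_three, Matrix.vecHead, Matrix.vecTail, w1, w4, w6])

lemma t246 : LinearIndependent F ![w F 2, w F 4, w F 6] :=
  indep3 _ _ _ ![0,1,3] (by simp [Matrix.det_fin_three, Matrix.vecHead, Matrix.vecTail, w2, w4, w6])

lemma t346 : LinearIndependent F ![w F 3, w F 4, w F 6] :=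
  indep3 _ _ _ ![0,1,2] (by simp [Matrix.det_fin_three, Matrix.vecHead, Matrix.vecTail, w3, w4, w6])

lemma t056 : LinearIndependent F ![w F 0, w F 5, w F 6] :=
  indep3 _ _ _ ![0,1,3] (by simp [Matrix.det_fin_three, Matrix.vecHead, Matrix.vecTail, w0, w5, w6])

lemma t156 : LinearIndependent F ![w F 1, w F 5, w F 6] :=
  indep3 _ _ _ ![1,2,3] (by simp [Matrix.det_fin_three, Matrix.vecHead, Matrix.vecTail, w1, w5, w6])

lemma t256 : LinearIndependent F ![w F 2, w F 5, w F 6] :=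
  indep3 _ _ _ ![0,1,3] (by simp [Matrix.det_fin_three, Matrix.vecHead, Matrix.vecTail, w2, w5, w6])

lemma t356 : LinearIndependent F ![w F 3, w F 5, w F 6] :=
  indep3 _ _ _ ![1,2,3] (by simp [Matrix.det_fin_three, Matrix.vecHead, Matrix.vecTail, w3, w5, w6])

lemma t456 : LinearIndependent F ![w F 4, w F 5, w F 6] :=
  indep3 _ _ _ ![0,1,3] (by simp [Matrix.det_fin_three, Matrix.vecHead, Matrix.vecTail, w4, w5, w6])

lemma s0135 : LinearIndependent F ![w F 0, w F 1, w F 3, w F 5] :=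
  indep4 _ _ _ _ (by simp [det4, Matrix.vecHead, Matrix.vecTail, w0, w1, w3, w5])

lemma s0235 : LinearIndependent F ![w F 0, w F 2, w F 3, w F 5] :=
  indep4 _ _ _ _ (by simp [det4, Matrix.vecHead, Matrix.vecTail, w0, w2, w3, w5])

lemma s1235 : LinearIndependent F ![w F 1, w F 2, w F 3, w F 5] :=
  indep4 _ _ _ _ (by simp [det4, Matrix.vecHead, Matrix.vecTail, w1, w2, w3, w5])

lemma s0145 : LinearIndependent F ![w F 0, w F 1, w F 4, w F 5] :=
  indep4 _ _ _ _ (by simp [det4, Matrix.vecHead, Matrix.vecTail, w0, w1, w4, w5])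

lemma s0245 : LinearIndependent F ![w F 0, w F 2, w F 4, w F 5] :=
  indep4 _ _ _ _ (by simp [det4, Matrix.vecHead, Matrix.vecTail, w0, w2, w4, w5])

lemma s1245 : LinearIndependent F ![w F 1, w F 2, w F 4, w F 5] :=
  indep4 _ _ _ _ (by simp [det4, Matrix.vecHead, Matrix.vecTail, w1, w2, w4, w5])

lemma s1345 : LinearIndependent F ![w F 1, w F 3, w F 4, w F 5] :=
  indep4 _ _ _ _ (by simp [det4, Matrix.vecHead, Matrix.vecTail, w1, w3, w4, w5])

lemma s2345 : LinearIndependent F ![w F 2, w F 3, w F 4, w F 5] :=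
  indep4 _ _ _ _ (by simp [det4, Matrix.vecHead, Matrix.vecTail, w2, w3, w4, w5])

lemma s0136 : LinearIndependent F ![w F 0, w F 1, w F 3, w F 6] :=
  indep4 _ _ _ _ (by simp [det4, Matrix.vecHead, Matrix.vecTail, w0, w1, w3, w6])

lemma s0236 : LinearIndependent F ![w F 0, w F 2, w F 3, w F 6] :=
  indep4 _ _ _ _ (by simp [det4, Matrix.vecHead, Matrix.vecTail, w0, w2, w3, w6])

lemma s1236 : LinearIndependent F ![w F 1, w F 2, w F 3, w F 6] :=
  indep4 _ _ _ _ (by simp [det4, Matrix.vecHead, Matrix.vecTail, w1, w2, w3, w6])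

lemma s0146 : LinearIndependent F ![w F 0, w F 1, w F 4, w F 6] :=
  indep4 _ _ _ _ (by simp [det4, Matrix.vecHead, Matrix.vecTail, w0, w1, w4, w6])

lemma s0246 : LinearIndependent F ![w F 0, w F 2, w F 4, w F 6] :=
  indep4 _ _ _ _ (by simp [det4, Matrix.vecHead, Matrix.vecTail, w0, w2, w4, w6])

lemma s1246 : LinearIndependent F ![w F 1, w F 2, w F 4, w F 6] :=
  indep4 _ _ _ _ (by simp [det4, Matrix.vecHead, Matrix.vecTail, w1, w2, w4, w6])

lemma s1346 : LinearIndependent F ![w F 1, w F 3, w F 4, w F 6] :=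
  indep4 _ _ _ _ (by simp [det4, Matrix.vecHead, Matrix.vecTail, w1, w3, w4, w6])

lemma s2346 : LinearIndependent F ![w F 2, w F 3, w F 4, w F 6] :=
  indep4 _ _ _ _ (by simp [det4, Matrix.vecHead, Matrix.vecTail, w2, w3, w4, w6])

lemma s0156 : LinearIndependent F ![w F 0, w F 1, w F 5, w F 6] :=
  indep4 _ _ _ _ (by simp [det4, Matrix.vecHead, Matrix.vecTail, w0, w1, w5, w6])

lemma s0256 : LinearIndependent F ![w F 0, w F 2, w F 5, w F 6] :=
  indep4 _ _ _ _ (by simp [det4, Matrix.vecHead, Matrix.vecTail, w0, w2, w5, w6])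

lemma s1256 : LinearIndependent F ![w F 1, w F 2, w F 5, w F 6] :=
  indep4 _ _ _ _ (by simp [det4, Matrix.vecHead, Matrix.vecTail, w1, w2, w5, w6])

lemma s0356 : LinearIndependent F ![w F 0, w F 3, w F 5, w F 6] :=
  indep4 _ _ _ _ (by simp [det4, Matrix.vecHead, Matrix.vecTail, w0, w3, w5, w6])

lemma s2356 : LinearIndependent F ![w F 2, w F 3, w F 5, w F 6] :=
  indep4 _ _ _ _ (by simp [det4, Matrix.vecHead, Matrix.vecTail, w2, w3, w5, w6])

lemma s0456 : LinearIndependent F ![w F 0, w F 4, w F 5, w F 6] :=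
  indep4 _ _ _ _ (by simp [det4, Matrix.vecHead, Matrix.vecTail, w0, w4, w5, w6])

lemma s1456 : LinearIndependent F ![w F 1, w F 4, w F 5, w F 6] :=
  indep4 _ _ _ _ (by simp [det4, Matrix.vecHead, Matrix.vecTail, w1, w4, w5, w6])

lemma s3456 : LinearIndependent F ![w F 3, w F 4, w F 5, w F 6] :=
  indep4 _ _ _ _ (by simp [det4, Matrix.vecHead, Matrix.vecTail, w3, w4, w5, w6])

lemma main3 (T : Finset (Fin 7)) (hT : T.card = 3) :
    finrank F (span F (w F '' ↑T)) ≤ 2 ↔ ∃ l ∈ L₀, T ⊆ l := by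
  have hm : T ∈ Finset.filter (fun s => s.card = 3) Finset.univ := by simp [hT]
  fin_cases hm
  · refine tri_col _ (by decide) (w F 0) (w F 1) ?_
    intro i hi; fin_cases hi
    · exact Submodule.subset_span (by simp)
    · exact Submodule.subset_span (by simp)
    · show w F 2 ∈ span F {w F 0, w F 1}; rw [rel2]; exact add_mem (Submodule.subset_span (by simp)) (Submodule.subset_span (by simp))
  · exact tri_noncol _ (by decide) 0 1 3 (by decide) (by decide) (by decide) t013
  · exact tri_noncol _ (by decide) 0 2 3 (by decide) (by decide) (by decide) t023
  · exact tri_noncol _ (by decide) 1 2 3 (by decide) (by decide) (by decide) t123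
  · exact tri_noncol _ (by decide) 0 1 4 (by decide) (by decide) (by decide) t014
  · exact tri_noncol _ (by decide) 0 2 4 (by decide) (by decide) (by decide) t024
  · exact tri_noncol _ (by decide) 1 2 4 (by decide) (by decide) (by decide) t124
  · refine tri_col _ (by decide) (w F 0) (w F 3) ?_
    intro i hi; fin_cases hi
    · exact Submodule.subset_span (by simp)
    · exact Submodule.subset_span (by simp)
    · show w F 4 ∈ span F {w F 0, w F 3}; rw [rel4]; exact add_mem (Submodule.subset_span (by simp)) (Submodule.subset_span (by simp))
  · exact tri_noncol _ (by decide) 1 3 4 (by decide) (by decide) (by decide) t134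
  · exact tri_noncol _ (by decide) 2 3 4 (by decide) (by decide) (by decide) t234
  · exact tri_noncol _ (by decide) 0 1 5 (by decide) (by decide) (by decide) t015
  · exact tri_noncol _ (by decide) 0 2 5 (by decide) (by decide) (by decide) t025
  · exact tri_noncol _ (by decide) 1 2 5 (by decide) (by decide) (by decide) t125
  · exact tri_noncol _ (by decide) 0 3 5 (by decide) (by decide) (by decide) t035
  · exact tri_noncol _ (by decide) 1 3 5 (by decide) (by decide) (by decide) t135
  · exact tri_noncol _ (by decide) 2 3 5 (by decide) (by decide) (by decide) t235
  · exact tri_noncol _ (by decide) 0 4 5 (by decide) (by decide) (by decide) t045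
  · exact tri_noncol _ (by decide) 1 4 5 (by decide) (by decide) (by decide) t145
  · exact tri_noncol _ (by decide) 2 4 5 (by decide) (by decide) (by decide) t245
  · exact tri_noncol _ (by decide) 3 4 5 (by decide) (by decide) (by decide) t345
  · exact tri_noncol _ (by decide) 0 1 6 (by decide) (by decide) (by decide) t016
  · exact tri_noncol _ (by decide) 0 2 6 (by decide) (by decide) (by decide) t026
  · exact tri_noncol _ (by decide) 1 2 6 (by decide) (by decide) (by decide) t126
  · exact tri_noncol _ (by decide) 0 3 6 (by decide) (by decide) (by decide) t036
  · exact tri_noncol _ (by decide) 1 3 6 (by decide) (by decide) (by decide) t136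
  · exact tri_noncol _ (by decide) 2 3 6 (by decide) (by decide) (by decide) t236
  · exact tri_noncol _ (by decide) 0 4 6 (by decide) (by decide) (by decide) t046
  · exact tri_noncol _ (by decide) 1 4 6 (by decide) (by decide) (by decide) t146
  · exact tri_noncol _ (by decide) 2 4 6 (by decide) (by decide) (by decide) t246
  · exact tri_noncol _ (by decide) 3 4 6 (by decide) (by decide) (by decide) t346
  · exact tri_noncol _ (by decide) 0 5 6 (by decide) (by decide) (by decide) t056
  · exact tri_noncol _ (by decide) 1 5 6 (by decide) (by decide) (by decide) t156
  · exact tri_noncol _ (by decide) 2 5 6 (by decide) (by decide) (by decide) t256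
  · exact tri_noncol _ (by decide) 3 5 6 (by decide) (by decide) (by decide) t356
  · exact tri_noncol _ (by decide) 4 5 6 (by decide) (by decide) (by decide) t456

lemma main4 (T : Finset (Fin 7)) (hT : T.card = 4) :
    finrank F (span F (w F '' ↑T)) ≤ 3 ↔ ∃ h ∈ H₀, T ⊆ h := by
  have hm : T ∈ Finset.filter (fun s => s.card = 4) Finset.univ := by simp [hT]
  fin_cases hm
  · refine quad_cop _ (by decide) (w F 0) (w F 1) (w F 3) ?_
    intro i hi; fin_cases hi
    · exact Submodule.subset_span (by simp)
    · exact Submodule.subset_span (by simp)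
    · show w F 2 ∈ span F {w F 0, w F 1, w F 3}; rw [rel2]; exact add_mem (Submodule.subset_span (by simp)) (Submodule.subset_span (by simp))
    · exact Submodule.subset_span (by simp)
  · refine quad_cop _ (by decide) (w F 0) (w F 1) (w F 4) ?_
    intro i hi; fin_cases hi
    · exact Submodule.subset_span (by simp)
    · exact Submodule.subset_span (by simp)
    · show w F 2 ∈ span F {w F 0, w F 1, w F 4}; rw [rel2]; exact add_mem (Submodule.subset_span (by simp)) (Submodule.subset_span (by simp))
    · exact Submodule.subset_span (by simp)
  · refine quad_cop _ (by decide) (w F 0) (w F 1) (w F 3) ?_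
    intro i hi; fin_cases hi
    · exact Submodule.subset_span (by simp)
    · exact Submodule.subset_span (by simp)
    · exact Submodule.subset_span (by simp)
    · show w F 4 ∈ span F {w F 0, w F 1, w F 3}; rw [rel4]; exact add_mem (Submodule.subset_span (by simp)) (Submodule.subset_span (by simp))
  · refine quad_cop _ (by decide) (w F 0) (w F 2) (w F 3) ?_
    intro i hi; fin_cases hi
    · exact Submodule.subset_span (by simp)
    · exact Submodule.subset_span (by simp)
    · exact Submodule.subset_span (by simp)
    · show w F 4 ∈ span F {w F 0, w F 2, w F 3}; rw [rel4]; exact add_mem (Submodule.subset_span (by simp)) (Submodule.subset_span (by simp))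
  · refine quad_cop _ (by decide) (w F 1) (w F 2) (w F 3) ?_
    intro i hi; fin_cases hi
    · exact Submodule.subset_span (by simp)
    · exact Submodule.subset_span (by simp)
    · exact Submodule.subset_span (by simp)
    · show w F 4 ∈ span F {w F 1, w F 2, w F 3}; rw [rel4']; exact add_mem (sub_mem (Submodule.subset_span (by simp)) (Submodule.subset_span (by simp))) (Submodule.subset_span (by simp))
  · refine quad_cop _ (by decide) (w F 0) (w F 1) (w F 5) ?_
    intro i hi; fin_cases hi
    · exact Submodule.subset_span (by simp)
    · exact Submodule.subset_span (by simp)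
    · show w F 2 ∈ span F {w F 0, w F 1, w F 5}; rw [rel2]; exact add_mem (Submodule.subset_span (by simp)) (Submodule.subset_span (by simp))
    · exact Submodule.subset_span (by simp)
  · exact quad_noncop _ (by decide) 0 1 3 5 (by decide) (by decide) (by decide) (by decide) s0135
  · exact quad_noncop _ (by decide) 0 2 3 5 (by decide) (by decide) (by decide) (by decide) s0235
  · exact quad_noncop _ (by decide) 1 2 3 5 (by decide) (by decide) (by decide) (by decide) s1235
  · exact quad_noncop _ (by decide) 0 1 4 5 (by decide) (by decide) (by decide) (by decide) s0145
  · exact quad_noncop _ (by decide) 0 2 4 5 (by decide) (by decide) (by decide) (by decide) s0245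
  · exact quad_noncop _ (by decide) 1 2 4 5 (by decide) (by decide) (by decide) (by decide) s1245
  · refine quad_cop _ (by decide) (w F 0) (w F 3) (w F 5) ?_
    intro i hi; fin_cases hi
    · exact Submodule.subset_span (by simp)
    · exact Submodule.subset_span (by simp)
    · show w F 4 ∈ span F {w F 0, w F 3, w F 5}; rw [rel4]; exact add_mem (Submodule.subset_span (by simp)) (Submodule.subset_span (by simp))
    · exact Submodule.subset_span (by simp)
  · exact quad_noncop _ (by decide) 1 3 4 5 (by decide) (by decide) (by decide) (by decide) s1345
  · exact quad_noncop _ (by decide) 2 3 4 5 (by decide) (by decide) (by decide) (by decide) s2345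
  · refine quad_cop _ (by decide) (w F 0) (w F 1) (w F 6) ?_
    intro i hi; fin_cases hi
    · exact Submodule.subset_span (by simp)
    · exact Submodule.subset_span (by simp)
    · show w F 2 ∈ span F {w F 0, w F 1, w F 6}; rw [rel2]; exact add_mem (Submodule.subset_span (by simp)) (Submodule.subset_span (by simp))
    · exact Submodule.subset_span (by simp)
  · exact quad_noncop _ (by decide) 0 1 3 6 (by decide) (by decide) (by decide) (by decide) s0136
  · exact quad_noncop _ (by decide) 0 2 3 6 (by decide) (by decide) (by decide) (by decide) s0236
  · exact quad_noncop _ (by decide) 1 2 3 6 (by decide) (by decide) (by decide) (by decide) s1236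
  · exact quad_noncop _ (by decide) 0 1 4 6 (by decide) (by decide) (by decide) (by decide) s0146
  · exact quad_noncop _ (by decide) 0 2 4 6 (by decide) (by decide) (by decide) (by decide) s0246
  · exact quad_noncop _ (by decide) 1 2 4 6 (by decide) (by decide) (by decide) (by decide) s1246
  · refine quad_cop _ (by decide) (w F 0) (w F 3) (w F 6) ?_
    intro i hi; fin_cases hi
    · exact Submodule.subset_span (by simp)
    · exact Submodule.subset_span (by simp)
    · show w F 4 ∈ span F {w F 0, w F 3, w F 6}; rw [rel4]; exact add_mem (Submodule.subset_span (by simp)) (Submodule.subset_span (by simp))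
    · exact Submodule.subset_span (by simp)
  · exact quad_noncop _ (by decide) 1 3 4 6 (by decide) (by decide) (by decide) (by decide) s1346
  · exact quad_noncop _ (by decide) 2 3 4 6 (by decide) (by decide) (by decide) (by decide) s2346
  · exact quad_noncop _ (by decide) 0 1 5 6 (by decide) (by decide) (by decide) (by decide) s0156
  · exact quad_noncop _ (by decide) 0 2 5 6 (by decide) (by decide) (by decide) (by decide) s0256
  · exact quad_noncop _ (by decide) 1 2 5 6 (by decide) (by decide) (by decide) (by decide) s1256
  · exact quad_noncop _ (by decide) 0 3 5 6 (by decide) (by decide) (by decide) (by decide) s0356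
  · refine quad_cop _ (by decide) (w F 1) (w F 3) (w F 5) ?_
    intro i hi; fin_cases hi
    · exact Submodule.subset_span (by simp)
    · exact Submodule.subset_span (by simp)
    · exact Submodule.subset_span (by simp)
    · show w F 6 ∈ span F {w F 1, w F 3, w F 5}; rw [rel6]; exact add_mem (sub_mem (Submodule.subset_span (by simp)) (Submodule.subset_span (by simp))) (Submodule.subset_span (by simp))
  · exact quad_noncop _ (by decide) 2 3 5 6 (by decide) (by decide) (by decide) (by decide) s2356
  · exact quad_noncop _ (by decide) 0 4 5 6 (by decide) (by decide) (by decide) (by decide) s0456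
  · exact quad_noncop _ (by decide) 1 4 5 6 (by decide) (by decide) (by decide) (by decide) s1456
  · refine quad_cop _ (by decide) (w F 2) (w F 4) (w F 5) ?_
    intro i hi; fin_cases hi
    · exact Submodule.subset_span (by simp)
    · exact Submodule.subset_span (by simp)
    · exact Submodule.subset_span (by simp)
    · show w F 6 ∈ span F {w F 2, w F 4, w F 5}; rw [rel6']; exact add_mem (sub_mem (Submodule.subset_span (by simp)) (Submodule.subset_span (by simp))) (Submodule.subset_span (by simp))
  · exact quad_noncop _ (by decide) 3 4 5 6 (by decide) (by decide) (by decide) (by decide) s3456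

lemma w_ne (i : Fin 7) : w F i ≠ 0 := by
  fin_cases i <;> intro h <;>
    first
      | exact one_ne_zero (congrFun h 0)
      | exact one_ne_zero (congrFun h 1)
      | exact one_ne_zero (congrFun h 2)
      | exact one_ne_zero (congrFun h 3)

def Φ (e : (Fin 4 → F) ≃ₗ[F] (Fin 4 → F)) : Fin 7 → Projectivization F (Fin 4 → F) :=
  fun i => mk F (e (w F i)) (by simp [w_ne i])

lemma span_units_image {v v' : Fin 7 → (Fin 4 → F)} (S : Set (Fin 7))
    (h : ∀ i ∈ S, ∃ c : Fˣ, v' i = c • v i) :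
    span F (v' '' S) = span F (v '' S) := by
  apply le_antisymm <;> rw [span_le] <;> rintro x ⟨i, hi, rfl⟩
  · obtain ⟨c, hc⟩ := h i hi
    rw [hc]
    exact smul_mem _ _ (subset_span ⟨i, hi, rfl⟩)
  · obtain ⟨c, hc⟩ := h i hi
    have : v i = (c⁻¹ : Fˣ) • v' i := by rw [hc, smul_smul]; simp
    rw [this]
    exact smul_mem _ _ (subset_span ⟨i, hi, rfl⟩)

lemma rep_unit {x : Fin 4 → F} (hx : x ≠ 0) : ∃ c : Fˣ, (mk F x hx).rep = c • x := by
  obtain ⟨a, ha⟩ := (mk_eq_mk_iff F _ _ (rep_nonzero _) hx).1 (mk_rep _)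
  exact ⟨a, ha.symm⟩

lemma span_rep_image (e : (Fin 4 → F) ≃ₗ[F] (Fin 4 → F)) (S : Set (Fin 7)) :
    span F (Projectivization.rep '' (Φ e '' S))
      = (span F (w F '' S)).map (e : (Fin 4 → F) →ₗ[F] (Fin 4 → F)) := by
  have h1 : Projectivization.rep '' (Φ e '' S) = (fun i => (Φ e i).rep) '' S :=
    Set.image_image _ _ _
  have h2 : span F ((fun i => (Φ e i).rep) '' S) = span F ((fun i => e (w F i)) '' S) :=
    span_units_image S (fun i _ => rep_unit _)
  have h3 : ((fun i => e (w F i)) '' S) = ⇑e '' (w F '' S) := (Set.image_image _ _ _).symm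
  rw [h1, h2, h3]
  exact Submodule.span_image (e : (Fin 4 → F) →ₗ[F] (Fin 4 → F))

lemma finrank_span_rep_image (e : (Fin 4 → F) ≃ₗ[F] (Fin 4 → F)) (S : Set (Fin 7)) :
    finrank F (span F (Projectivization.rep '' (Φ e '' S))) = finrank F (span F (w F '' S)) := by
  rw [span_rep_image]
  exact LinearEquiv.finrank_map_eq e _


lemma isReal_Φ (e : (Fin 4 → F) ≃ₗ[F] (Fin 4 → F)) : IsStrongRealization F L₀ H₀ (Φ e) := by
  refine ⟨?_, ?_, ?_⟩
  · intro i j hij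
    by_contra hne
    obtain ⟨k, hk3, hkL⟩ : ∃ k : Fin 7, ({i, j, k} : Finset (Fin 7)).card = 3 ∧
        ¬ ∃ l ∈ L₀, ({i, j, k} : Finset (Fin 7)) ⊆ l := by
      fin_cases i <;> fin_cases j <;>
        first
          | exact absurd rfl hne
          | exact ⟨5, by decide, by decide⟩
          | exact ⟨6, by decide, by decide⟩
          | exact ⟨0, by decide, by decide⟩
    have hm := main3 (F := F) ({i, j, k} : Finset (Fin 7)) hk3
    have hr := finrank_span_rep_image e (↑({i, j, k} : Finset (Fin 7)))
    have him : Projectivization.rep '' (Φ e '' ↑({i, j, k} : Finset (Fin 7))) ⊆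
        ↑(span F {(Φ e j).rep, (Φ e k).rep}) := by
      rintro u ⟨p, ⟨m, hm', rfl⟩, rfl⟩
      have hm'' : m = i ∨ m = j ∨ m = k := by simpa using hm'
      rcases hm'' with rfl | rfl | rfl
      · rw [hij]; exact subset_span (Set.mem_insert _ _)
      · exact subset_span (Set.mem_insert _ _)
      · exact subset_span (Set.mem_insert_of_mem _ rfl)
    have hle := rank_le_two_of_subset _ _ him
    rw [hr] at hle
    exact hkL (hm.1 hle)
  · intro T hT
    unfold IsCollinearSet
    rw [finrank_span_rep_image e (↑T)]
    exact main3 T hT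
  · intro T hT
    unfold IsCoplanarSet
    rw [finrank_span_rep_image e (↑T)]
    exact main4 T hT

lemma comp4 {α β : Type*} (f : α → β) (x y z t : α) :
    f ∘ ![x, y, z, t] = ![f x, f y, f z, f t] := by
  funext i; fin_cases i <;> rfl

lemma coeff_eq {v : Fin 4 → (Fin 4 → F)} (hv : LinearIndependent F v) (a b : Fin 4 → F)
    (h : a 0 • v 0 + a 1 • v 1 + a 2 • v 2 + a 3 • v 3
       = b 0 • v 0 + b 1 • v 1 + b 2 • v 2 + b 3 • v 3) : ∀ i, a i = b i := by
  have h0 := Fintype.linearIndependent_iff.1 hv (a - b) ?_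
  · intro i; have := h0 i; rwa [Pi.sub_apply, sub_eq_zero] at this
  · rw [Fin.sum_univ_four]
    simp only [Pi.sub_apply, sub_smul]
    have hs := sub_eq_zero.2 h
    rw [← hs]; abel

lemma unique_scalar (e e' : (Fin 4 → F) ≃ₗ[F] (Fin 4 → F)) (h : ∀ i, Φ e i = Φ e' i) :
    ∃ c : Fˣ, ∀ v, e' v = (c : F) • e v := by
  have hv : LinearIndependent F ![e (w F 0), e (w F 1), e (w F 3), e (w F 5)] := by
    rw [← comp4 e]
    exact (s0135 (F := F)).map' e.toLinearMap e.ker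
  have hc : ∀ i, ∃ c : Fˣ, e' (w F i) = (c : F) • e (w F i) := by
    intro i
    obtain ⟨a, ha⟩ := (mk_eq_mk_iff F _ _ (by simp [w_ne i]) (by simp [w_ne i])).1 (h i).symm
    exact ⟨a, by rw [← ha]; rfl⟩
  choose c hc using hc
  -- relation 2
  have e2 : (c 2 : F) • e (w F 0) + (c 2 : F) • e (w F 1) = (c 0 : F) • e (w F 0) + (c 1 : F) • e (w F 1) := by
    have h1 : e' (w F 2) = e' (w F 0) + e' (w F 1) := by rw [← map_add]; exact congrArg _ rel2
    have h2 : e (w F 2) = e (w F 0) + e (w F 1) := by rw [← map_add]; exact congrArg _ rel2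
    rw [hc 2, hc 0, hc 1, h2, smul_add] at h1
    exact h1
  have k2 := coeff_eq hv ![(c 2 : F), (c 2 : F), 0, 0] ![(c 0 : F), (c 1 : F), 0, 0] (by
    simp only [Matrix.cons_val_zero, Matrix.cons_val_one, Matrix.head_cons,
      Matrix.cons_val_two, Matrix.cons_val_three, Matrix.tail_cons, zero_smul, add_zero]
    exact e2)
  have h20 : (c 2 : F) = (c 0 : F) := k2 0
  have h21 : (c 2 : F) = (c 1 : F) := k2 1
  -- relation 4
  have e4 : (c 4 : F) • e (w F 0) + (c 4 : F) • e (w F 3) = (c 0 : F) • e (w F 0) + (c 3 : F) • e (w F 3) := by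
    have h1 : e' (w F 4) = e' (w F 0) + e' (w F 3) := by rw [← map_add]; exact congrArg _ rel4
    have h2 : e (w F 4) = e (w F 0) + e (w F 3) := by rw [← map_add]; exact congrArg _ rel4
    rw [hc 4, hc 0, hc 3, h2, smul_add] at h1
    exact h1
  have k4 := coeff_eq hv ![(c 4 : F), 0, (c 4 : F), 0] ![(c 0 : F), 0, (c 3 : F), 0] (by
    simp only [Matrix.cons_val_zero, Matrix.cons_val_one, Matrix.head_cons,
      Matrix.cons_val_two, Matrix.cons_val_three, Matrix.tail_cons, zero_smul, add_zero, zero_add]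
    exact e4)
  have h40 : (c 4 : F) = (c 0 : F) := k4 0
  have h43 : (c 4 : F) = (c 3 : F) := k4 2
  -- relation 6
  have e6 : (c 6 : F) • e (w F 1) + (-(c 6 : F)) • e (w F 3) + (c 6 : F) • e (w F 5)
      = (c 1 : F) • e (w F 1) + (-(c 3 : F)) • e (w F 3) + (c 5 : F) • e (w F 5) := by
    have h1 : e' (w F 6) = e' (w F 1) - e' (w F 3) + e' (w F 5) := by
      rw [← map_sub, ← map_add]; exact congrArg _ rel6
    have h2 : e (w F 6) = e (w F 1) - e (w F 3) + e (w F 5) := by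
      rw [← map_sub, ← map_add]; exact congrArg _ rel6
    rw [hc 6, hc 1, hc 3, hc 5, h2, smul_add, smul_sub] at h1
    simp only [neg_smul, ← sub_eq_add_neg]
    exact h1
  have k6 := coeff_eq hv ![0, (c 6 : F), -(c 6 : F), (c 6 : F)] ![0, (c 1 : F), -(c 3 : F), (c 5 : F)] (by
    simp only [Matrix.cons_val_zero, Matrix.cons_val_one, Matrix.head_cons,
      Matrix.cons_val_two, Matrix.cons_val_three, Matrix.tail_cons, zero_smul, zero_add]
    exact e6)
  have h61 : (c 6 : F) = (c 1 : F) := k6 1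
  have h63' : (-(c 6 : F)) = (-(c 3 : F)) := k6 2
  have h63 : (c 6 : F) = (c 3 : F) := neg_inj.1 h63'
  have h65 : (c 6 : F) = (c 5 : F) := k6 3
  -- all equal to c 0
  have hall : ∀ i : Fin 7, (c i : F) = (c 0 : F) := by
    intro i
    fin_cases i
    · rfl
    · show (c 1 : F) = (c 0 : F); rw [← h21, h20]
    · show (c 2 : F) = (c 0 : F); exact h20
    · show (c 3 : F) = (c 0 : F); rw [← h43, h40]
    · show (c 4 : F) = (c 0 : F); exact h40
    · show (c 5 : F) = (c 0 : F); rw [← h65, h63, ← h43, h40]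
    · show (c 6 : F) = (c 0 : F); rw [h63, ← h43, h40]
  refine ⟨c 0, ?_⟩
  have key : ∀ i : Fin 7, e' (w F i) = (c 0 : F) • e (w F i) := by
    intro i; rw [hc i, hall i]
  have hB : e'.toLinearMap = ((c 0 : F) • e.toLinearMap) := by
    apply Basis.ext (Pi.basisFun F (Fin 4))
    intro j
    have hBj : ∃ i : Fin 7, (Pi.basisFun F (Fin 4)) j = w F i := by
      fin_cases j
      exacts [⟨0, by funext r; fin_cases r <;> simp [w0]⟩,
        ⟨1, by funext r; fin_cases r <;> simp [w1]⟩,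
        ⟨3, by funext r; fin_cases r <;> simp [w3]⟩,
        ⟨5, by funext r; fin_cases r <;> simp [w5]⟩]
    obtain ⟨i, hi⟩ := hBj
    rw [hi, LinearMap.smul_apply]
    exact key i
  intro v
  have := LinearMap.ext_iff.1 hB v
  simpa using this

lemma range2_eq (x y : Fin 4 → F) : Set.range ![x, y] = {x, y} := by
  simp only [Matrix.range_cons, Matrix.range_empty, Set.union_empty, Set.union_singleton]
  ext u; simp; tauto

lemma img3 (σ : Fin 7 → Projectivization F (Fin 4 → F)) (a b c : Fin 7) :
    Projectivization.rep '' (σ '' ↑({a, b, c} : Finset (Fin 7)))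
      = {(σ a).rep, (σ b).rep, (σ c).rep} := by
  simp [Set.image_insert_eq]

lemma img4 (σ : Fin 7 → Projectivization F (Fin 4 → F)) (a b c d : Fin 7) :
    Projectivization.rep '' (σ '' ↑({a, b, c, d} : Finset (Fin 7)))
      = {(σ a).rep, (σ b).rep, (σ c).rep, (σ d).rep} := by
  simp [Set.image_insert_eq]

lemma ne_smul_rep (σ : Fin 7 → Projectivization F (Fin 4 → F))
    (hinj : Function.Injective σ) {i j : Fin 7} (hij : i ≠ j) (t : F) :
    (σ i).rep ≠ t • (σ j).rep := by
  intro hEq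
  have ht : t ≠ 0 := by
    rintro rfl
    rw [zero_smul] at hEq
    exact rep_nonzero (σ i) hEq
  have h1 : mk F (σ i).rep (rep_nonzero _) = mk F (σ j).rep (rep_nonzero _) :=
    (mk_eq_mk_iff F _ _ _ _).2 ⟨Units.mk0 t ht, hEq.symm⟩
  rw [mk_rep, mk_rep] at h1
  exact hij (hinj h1)

lemma mk_eq_point (σ : Fin 7 → Projectivization F (Fin 4 → F)) (i : Fin 7)
    (X : Fin 4 → F) (hX0 : X ≠ 0) {t : F} (ht : t ≠ 0) (hX : X = t • (σ i).rep) :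
    mk F X hX0 = σ i := by
  have h1 : mk F X hX0 = mk F (σ i).rep (rep_nonzero _) :=
    (mk_eq_mk_iff F _ _ _ _).2 ⟨Units.mk0 t ht, hX.symm⟩
  rw [h1, mk_rep]

lemma surj_Φ (σ : Fin 7 → Projectivization F (Fin 4 → F))
    (hσ : IsStrongRealization F L₀ H₀ σ) : ∃ e : (Fin 4 → F) ≃ₗ[F] (Fin 4 → F), Φ e = σ := by
  obtain ⟨hinj, h3, h4⟩ := hσ
  set u : Fin 7 → (Fin 4 → F) := fun i => (σ i).rep with hu_def
  have hu : ∀ i, u i ≠ 0 := fun i => rep_nonzero (σ i)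
  -- {0,1,3,5} not coplanar : u0 u1 u3 u5 independent
  have hind : LinearIndependent F ![u 0, u 1, u 3, u 5] := by
    have hnc := h4 ({0, 1, 3, 5} : Finset (Fin 7)) (by decide)
    unfold IsCoplanarSet at hnc
    rw [img4 σ 0 1 3 5] at hnc
    have hgt : ¬ finrank F (span F {u 0, u 1, u 3, u 5}) ≤ 3 :=
      fun hle => (by decide : ¬ ∃ h ∈ H₀, ({0, 1, 3, 5} : Finset (Fin 7)) ⊆ h) (hnc.1 hle)
    have hle4 : finrank F (span F ({u 0, u 1, u 3, u 5} : Set (Fin 4 → F))) ≤ 4 := by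
      have := Submodule.finrank_le (span F ({u 0, u 1, u 3, u 5} : Set (Fin 4 → F)))
      simpa [finrank_fintype_fun_eq_card] using this
    rw [linearIndependent_iff_card_eq_finrank_span]
    rw [Set.finrank, range4_eq]
    simp only [Fintype.card_fin]
    omega
  have hind01 : LinearIndependent F ![u 0, u 1] := by
    have := hind.comp ![0, 1] (by decide)
    rwa [show ![u 0, u 1, u 3, u 5] ∘ ![0, 1] = ![u 0, u 1] from by
      funext i; fin_cases i <;> rfl] at this
  have hind03 : LinearIndependent F ![u 0, u 3] := by
    have := hind.comp ![0, 2] (by decide)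
    rwa [show ![u 0, u 1, u 3, u 5] ∘ ![0, 2] = ![u 0, u 3] from by
      funext i; fin_cases i <;> rfl] at this
  have hind135 : LinearIndependent F ![u 1, u 3, u 5] := by
    have := hind.comp ![1, 2, 3] (by decide)
    rwa [show ![u 0, u 1, u 3, u 5] ∘ ![1, 2, 3] = ![u 1, u 3, u 5] from by
      funext i; fin_cases i <;> rfl] at this
  -- u2 ∈ span {u0, u1}
  have hmem2 : u 2 ∈ span F {u 0, u 1} := by
    have hc := h3 ({0, 1, 2} : Finset (Fin 7)) (by decide)
    unfold IsCollinearSet at hc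
    rw [img3 σ 0 1 2] at hc
    have hle : finrank F (span F {u 0, u 1, u 2}) ≤ 2 := hc.2 (by decide)
    have h2 : finrank F (span F ({u 0, u 1} : Set (Fin 4 → F))) = 2 := by
      rw [← range2_eq, finrank_span_eq_card hind01]; simp
    have hle' : span F ({u 0, u 1} : Set (Fin 4 → F)) ≤ span F {u 0, u 1, u 2} :=
      span_mono (by intro v hv; simp at hv ⊢; tauto)
    have heq := eq_of_le_of_finrank_le hle' (by omega)
    rw [heq]
    exact subset_span (by simp)
  have hmem4 : u 4 ∈ span F {u 0, u 3} := by
    have hc := h3 ({0, 3, 4} : Finset (Fin 7)) (by decide)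
    unfold IsCollinearSet at hc
    rw [img3 σ 0 3 4] at hc
    have hle : finrank F (span F {u 0, u 3, u 4}) ≤ 2 := hc.2 (by decide)
    have h2 : finrank F (span F ({u 0, u 3} : Set (Fin 4 → F))) = 2 := by
      rw [← range2_eq, finrank_span_eq_card hind03]; simp
    have hle' : span F ({u 0, u 3} : Set (Fin 4 → F)) ≤ span F {u 0, u 3, u 4} :=
      span_mono (by intro v hv; simp at hv ⊢; tauto)
    have heq := eq_of_le_of_finrank_le hle' (by omega)
    rw [heq]
    exact subset_span (by simp)
  have hmem6a : u 6 ∈ span F {u 1, u 3, u 5} := by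
    have hc := h4 ({1, 3, 5, 6} : Finset (Fin 7)) (by decide)
    unfold IsCoplanarSet at hc
    rw [img4 σ 1 3 5 6] at hc
    have hle : finrank F (span F {u 1, u 3, u 5, u 6}) ≤ 3 := hc.2 (by decide)
    have h2 : finrank F (span F ({u 1, u 3, u 5} : Set (Fin 4 → F))) = 3 := by
      rw [← range3_eq, finrank_span_eq_card hind135]; simp
    have hle' : span F ({u 1, u 3, u 5} : Set (Fin 4 → F)) ≤ span F {u 1, u 3, u 5, u 6} :=
      span_mono (by intro v hv; simp at hv ⊢; tauto)
    have heq := eq_of_le_of_finrank_le hle' (by omega)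
    rw [heq]
    exact subset_span (by simp)
  have hmem6b : u 6 ∈ span F {u 2, u 4, u 5} := by
    have hc := h4 ({2, 4, 5, 6} : Finset (Fin 7)) (by decide)
    unfold IsCoplanarSet at hc
    rw [img4 σ 2 4 5 6] at hc
    have hle : finrank F (span F {u 2, u 4, u 5, u 6}) ≤ 3 := hc.2 (by decide)
    have hnc := h3 ({2, 4, 5} : Finset (Fin 7)) (by decide)
    unfold IsCollinearSet at hnc
    rw [img3 σ 2 4 5] at hnc
    have hgt : ¬ finrank F (span F {u 2, u 4, u 5}) ≤ 2 :=
      fun hle => (by decide : ¬ ∃ l ∈ L₀, ({2, 4, 5} : Finset (Fin 7)) ⊆ l) (hnc.1 hle)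
    have h2 : finrank F (span F ({u 2, u 4, u 5} : Set (Fin 4 → F))) = 3 := by
      have := finrank_span_triple_le (u 2) (u 4) (u 5)
      omega
    have hle' : span F ({u 2, u 4, u 5} : Set (Fin 4 → F)) ≤ span F {u 2, u 4, u 5, u 6} :=
      span_mono (by intro v hv; simp at hv ⊢; tauto)
    have heq := eq_of_le_of_finrank_le hle' (by omega)
    rw [heq]
    exact subset_span (by simp)
  -- coefficients
  obtain ⟨a, b, hab⟩ := Submodule.mem_span_pair.1 hmem2
  obtain ⟨c, d, hcd⟩ := Submodule.mem_span_pair.1 hmem4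
  obtain ⟨α, z1, hz1, hz2⟩ := Submodule.mem_span_insert.1 hmem6a
  obtain ⟨β, γ, hbg⟩ := Submodule.mem_span_pair.1 hz1
  have h135 : α • u 1 + β • u 3 + γ • u 5 = u 6 := by
    rw [hz2, ← hbg]; abel
  obtain ⟨x, z3, hz3, hz4⟩ := Submodule.mem_span_insert.1 hmem6b
  obtain ⟨y, z, hyz⟩ := Submodule.mem_span_pair.1 hz3
  have h245 : x • u 2 + y • u 4 + z • u 5 = u 6 := by
    rw [hz4, ← hyz]; abel
  -- nonzero facts
  have hb : b ≠ 0 := by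
    rintro rfl
    rw [zero_smul, add_zero] at hab
    exact ne_smul_rep σ hinj (by decide : (2 : Fin 7) ≠ 0) a hab.symm
  have ha : a ≠ 0 := by
    rintro rfl
    rw [zero_smul, zero_add] at hab
    exact ne_smul_rep σ hinj (by decide : (2 : Fin 7) ≠ 1) b hab.symm
  have hd : d ≠ 0 := by
    rintro rfl
    rw [zero_smul, add_zero] at hcd
    exact ne_smul_rep σ hinj (by decide : (4 : Fin 7) ≠ 0) c hcd.symm
  have hcc : c ≠ 0 := by
    rintro rfl
    rw [zero_smul, zero_add] at hcd
    exact ne_smul_rep σ hinj (by decide : (4 : Fin 7) ≠ 3) d hcd.symm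
  have not_cop : ∀ (p q r s : Fin 7), (({p, q, r, s} : Finset (Fin 7)).card = 4) →
      (¬ ∃ h ∈ H₀, ({p, q, r, s} : Finset (Fin 7)) ⊆ h) →
      ¬ finrank F (span F {u p, u q, u r, u s}) ≤ 3 := by
    intro p q r s hcard hnot hle
    have hc := h4 ({p, q, r, s} : Finset (Fin 7)) hcard
    unfold IsCoplanarSet at hc
    rw [img4 σ p q r s] at hc
    exact hnot (hc.1 hle)
  have halpha : α ≠ 0 := by
    rintro rfl
    rw [zero_smul, zero_add] at h135
    refine not_cop 0 3 5 6 (by decide) (by decide) ?_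
    refine rank_le_three_of_subset (u 0) (u 3) (u 5) ?_
    rintro v (rfl | rfl | rfl | rfl)
    · exact subset_span (by simp)
    · exact subset_span (by simp)
    · exact subset_span (by simp)
    · rw [← h135]
      exact add_mem (smul_mem _ _ (subset_span (by simp))) (smul_mem _ _ (subset_span (by simp)))
  have hgamma : γ ≠ 0 := by
    rintro rfl
    rw [zero_smul, add_zero] at h135
    refine not_cop 0 1 3 6 (by decide) (by decide) ?_
    refine rank_le_three_of_subset (u 0) (u 1) (u 3) ?_
    rintro v (rfl | rfl | rfl | rfl)
    · exact subset_span (by simp)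
    · exact subset_span (by simp)
    · exact subset_span (by simp)
    · rw [← h135]
      exact add_mem (smul_mem _ _ (subset_span (by simp))) (smul_mem _ _ (subset_span (by simp)))
  -- the key relation
  have hexp : (x * a + y * c) • u 0 + (x * b) • u 1 + (y * d) • u 3 + z • u 5
      = (0 : F) • u 0 + α • u 1 + β • u 3 + γ • u 5 := by
    rw [zero_smul, zero_add]
    calc (x * a + y * c) • u 0 + (x * b) • u 1 + (y * d) • u 3 + z • u 5
        = x • (a • u 0 + b • u 1) + y • (c • u 0 + d • u 3) + z • u 5 := by module
      _ = x • u 2 + y • u 4 + z • u 5 := by rw [hab, hcd]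
      _ = u 6 := h245
      _ = α • u 1 + β • u 3 + γ • u 5 := h135.symm
  have k := coeff_eq hind ![x * a + y * c, x * b, y * d, z] ![0, α, β, γ] (by
    simp only [Matrix.cons_val_zero, Matrix.cons_val_one, Matrix.head_cons,
      Matrix.cons_val_two, Matrix.cons_val_three, Matrix.tail_cons]
    exact hexp)
  have k0 : x * a + y * c = 0 := k 0
  have k1 : x * b = α := k 1
  have k2 : y * d = β := k 2
  have hrel : b * c * β + a * d * α = 0 := by
    linear_combination b * c * k2.symm + a * d * k1.symm + b * d * k0
  -- the map
  have hBind : LinearIndependent F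
      ![(a * c) • u 0, (b * c) • u 1, (a * d) • u 3, (b * c * γ * α⁻¹) • u 5] := by
    have hg := hind.units_smul ![Units.mk0 (a * c) (mul_ne_zero ha hcc),
      Units.mk0 (b * c) (mul_ne_zero hb hcc), Units.mk0 (a * d) (mul_ne_zero ha hd),
      Units.mk0 (b * c * γ * α⁻¹) (by
        exact mul_ne_zero (mul_ne_zero (mul_ne_zero hb hcc) hgamma) (inv_ne_zero halpha))]
    rwa [show (![Units.mk0 (a * c) (mul_ne_zero ha hcc),
      Units.mk0 (b * c) (mul_ne_zero hb hcc), Units.mk0 (a * d) (mul_ne_zero ha hd),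
      Units.mk0 (b * c * γ * α⁻¹) (mul_ne_zero (mul_ne_zero (mul_ne_zero hb hcc) hgamma)
        (inv_ne_zero halpha))] • ![u 0, u 1, u 3, u 5])
      = ![(a * c) • u 0, (b * c) • u 1, (a * d) • u 3, (b * c * γ * α⁻¹) • u 5] from by
        funext i; fin_cases i <;> rfl] at hg
  have hcard4 : Fintype.card (Fin 4) = finrank F (Fin 4 → F) := by
    simp [finrank_fintype_fun_eq_card]
  let Bb : Basis (Fin 4) F (Fin 4 → F) := basisOfLinearIndependentOfCardEqFinrank hBind hcard4
  let e : (Fin 4 → F) ≃ₗ[F] (Fin 4 → F) := (Pi.basisFun F (Fin 4)).equiv Bb (Equiv.refl _)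
  have hBb : ∀ j : Fin 4, Bb j =
      ![(a * c) • u 0, (b * c) • u 1, (a * d) • u 3, (b * c * γ * α⁻¹) • u 5] j := by
    intro j
    simp [Bb, coe_basisOfLinearIndependentOfCardEqFinrank]
  have he : ∀ j : Fin 4, e ((Pi.basisFun F (Fin 4)) j) =
      ![(a * c) • u 0, (b * c) • u 1, (a * d) • u 3, (b * c * γ * α⁻¹) • u 5] j := by
    intro j
    have := Basis.equiv_apply (Pi.basisFun F (Fin 4)) j (Equiv.refl (Fin 4)) (b' := Bb)
    simp only [Equiv.refl_apply] at this
    rw [show e ((Pi.basisFun F (Fin 4)) j) = (((Pi.basisFun F (Fin 4)).equiv Bb (Equiv.refl _))) ((Pi.basisFun F (Fin 4)) j) from rfl, this]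
    exact hBb j
  have hw0 : w F 0 = (Pi.basisFun F (Fin 4)) 0 := by
    funext r; fin_cases r <;> simp [show w F 0 = ![1,0,0,0] from rfl]
  have hw1 : w F 1 = (Pi.basisFun F (Fin 4)) 1 := by
    funext r; fin_cases r <;> simp [show w F 1 = ![0,1,0,0] from rfl]
  have hw3 : w F 3 = (Pi.basisFun F (Fin 4)) 2 := by
    funext r; fin_cases r <;> simp [show w F 3 = ![0,0,1,0] from rfl]
  have hw5 : w F 5 = (Pi.basisFun F (Fin 4)) 3 := by
    funext r; fin_cases r <;> simp [show w F 5 = ![0,0,0,1] from rfl]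
  have he0 : e (w F 0) = (a * c) • u 0 := by rw [hw0]; exact he 0
  have he1 : e (w F 1) = (b * c) • u 1 := by rw [hw1]; exact he 1
  have he3 : e (w F 3) = (a * d) • u 3 := by rw [hw3]; exact he 2
  have he5 : e (w F 5) = (b * c * γ * α⁻¹) • u 5 := by rw [hw5]; exact he 3
  have he2 : e (w F 2) = c • u 2 := by
    rw [rel2, map_add, he0, he1, ← hab]
    module
  have he4 : e (w F 4) = a • u 4 := by
    rw [rel4, map_add, he0, he3, ← hcd]
    module
  have he6 : e (w F 6) = (b * c * α⁻¹) • u 6 := by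
    rw [rel6, map_add, map_sub, he1, he3, he5, ← h135]
    have hA : b * c * α⁻¹ * α = b * c := by field_simp
    have hB : b * c * α⁻¹ * β = -(a * d) := by
      field_simp
      linear_combination hrel
    rw [smul_add, smul_add, smul_smul, smul_smul, smul_smul, hA, hB]
    module
  refine ⟨e, ?_⟩
  funext i
  fin_cases i
  · exact mk_eq_point σ 0 _ _ (mul_ne_zero ha hcc) he0
  · exact mk_eq_point σ 1 _ _ (mul_ne_zero hb hcc) he1
  · exact mk_eq_point σ 2 _ _ hcc he2
  · exact mk_eq_point σ 3 _ _ (mul_ne_zero ha hd) he3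
  · exact mk_eq_point σ 4 _ _ ha he4
  · exact mk_eq_point σ 5 _ _
      (mul_ne_zero (mul_ne_zero (mul_ne_zero hb hcc) hgamma) (inv_ne_zero halpha)) he5
  · exact mk_eq_point σ 6 _ _ (mul_ne_zero (mul_ne_zero hb hcc) (inv_ne_zero halpha)) he6

theorem main_count (q : ℕ) [Fintype F] (hq : Fintype.card F = q) :
    (Nat.card {σ : Fin 7 → Projectivization F (Fin 4 → F) //
        IsStrongRealization F L₀ H₀ σ} : ℤ) =
      (q : ℤ) ^ 6 * ((q : ℤ) ^ 4 - 1) * ((q : ℤ) ^ 3 - 1) * ((q : ℤ) ^ 2 - 1) := by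
  classical
  set R := {σ : Fin 7 → Projectivization F (Fin 4 → F) // IsStrongRealization F L₀ H₀ σ} with hR
  -- section of Φ
  have hsec : ∀ σ : R, ∃ e : (Fin 4 → F) ≃ₗ[F] (Fin 4 → F), Φ e = σ.1 :=
    fun σ => surj_Φ σ.1 σ.2
  choose s hs using hsec
  -- the bijection
  let Ψ : Fˣ × R → ((Fin 4 → F) ≃ₗ[F] (Fin 4 → F)) :=
    fun p => (s p.2).trans (LinearEquiv.smulOfUnit p.1)
  have hΨ_apply : ∀ (c : Fˣ) (σ : R) (v : Fin 4 → F),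
      Ψ (c, σ) v = (c : F) • (s σ) v := fun c σ v => rfl
  have hΦΨ : ∀ (c : Fˣ) (σ : R), Φ (Ψ (c, σ)) = σ.1 := by
    intro c σ
    funext i
    have h1 : Φ (Ψ (c, σ)) i = mk F ((c : F) • (s σ) (w F i)) (by
        simp [smul_ne_zero_iff, c.ne_zero, (s σ).map_ne_zero_iff.2 (w_ne i)]) := rfl
    rw [h1]
    have h2 : mk F ((c : F) • (s σ) (w F i))
        (by simp [smul_ne_zero_iff, c.ne_zero, (s σ).map_ne_zero_iff.2 (w_ne i)])
        = mk F ((s σ) (w F i)) ((s σ).map_ne_zero_iff.2 (w_ne i)) :=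
      (mk_eq_mk_iff F _ _ _ _).2 ⟨c, rfl⟩
    rw [h2]
    have h3 : mk F ((s σ) (w F i)) ((s σ).map_ne_zero_iff.2 (w_ne i)) = Φ (s σ) i := rfl
    rw [h3, hs σ]
  have hbij : Function.Bijective Ψ := by
    constructor
    · rintro ⟨c, σ⟩ ⟨c', σ'⟩ hcc
      have hσσ : σ = σ' := by
        apply Subtype.ext
        rw [← hΦΨ c σ, ← hΦΨ c' σ', hcc]
      subst hσσ
      have hX : (s σ) (w F 0) ≠ 0 := (s σ).map_ne_zero_iff.2 (w_ne 0)
      have hv : (c : F) • (s σ) (w F 0) = (c' : F) • (s σ) (w F 0) := by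
        rw [← hΨ_apply c σ, ← hΨ_apply c' σ]
        exact DFunLike.congr_fun hcc (w F 0)
      have hsub : ((c : F) - (c' : F)) • (s σ) (w F 0) = 0 := by
        rw [sub_smul, hv, sub_self]
      rcases smul_eq_zero.1 hsub with h0 | h0
      · have hce : (c : F) = (c' : F) := sub_eq_zero.1 h0
        rw [Units.ext hce]
      · exact absurd h0 hX
    · intro e
      have hu := unique_scalar (s ⟨Φ e, isReal_Φ e⟩) e (by
        intro i
        rw [hs ⟨Φ e, isReal_Φ e⟩])
      obtain ⟨c, hc⟩ := hu
      refine ⟨(c, ⟨Φ e, isReal_Φ e⟩), ?_⟩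
      apply LinearEquiv.toLinearMap_injective
      apply LinearMap.ext
      intro v
      rw [show (Ψ (c, ⟨Φ e, isReal_Φ e⟩)).toLinearMap v = Ψ (c, ⟨Φ e, isReal_Φ e⟩) v from rfl]
      rw [hΨ_apply]
      exact (hc v).symm
  -- cardinalities
  have hcard1 : Nat.card (Fˣ × R) = Nat.card ((Fin 4 → F) ≃ₗ[F] (Fin 4 → F)) :=
    Nat.card_congr (Equiv.ofBijective Ψ hbij)
  have hcard2 : Nat.card ((Fin 4 → F) ≃ₗ[F] (Fin 4 → F)) = Nat.card (GL (Fin 4) F) := by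
    refine Nat.card_congr ?_
    exact ((Matrix.GeneralLinearGroup.toLin (n := Fin 4) (R := F)).toEquiv.trans
      (LinearMap.GeneralLinearGroup.generalLinearEquiv F (Fin 4 → F)).toEquiv).symm
  have hGL : Nat.card (GL (Fin 4) F) = ∏ i : Fin 4, (q ^ 4 - q ^ (i : ℕ)) := by
    rw [Matrix.card_GL_field, hq]
  have hunits : Nat.card Fˣ = q - 1 := by
    rw [Nat.card_units, Nat.card_eq_fintype_card, hq]
  have hprod : (q - 1) * Nat.card R = ∏ i : Fin 4, (q ^ 4 - q ^ (i : ℕ)) := by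
    rw [← hunits, ← Nat.card_prod, hcard1, hcard2, hGL]
  have hq2 : 2 ≤ q := by
    rw [← hq]
    exact Fintype.one_lt_card
  -- cast to ℤ
  have hcast : ((q : ℤ) - 1) * (Nat.card R : ℤ)
      = ((q:ℤ)^4 - 1) * ((q:ℤ)^4 - q) * ((q:ℤ)^4 - q^2) * ((q:ℤ)^4 - q^3) := by
    have h1 : (1:ℕ) ≤ q := by omega
    have hthis := congrArg (fun n : ℕ => (n : ℤ)) hprod
    simp only [Nat.cast_mul, Nat.cast_prod] at hthis
    rw [Fin.prod_univ_four] at hthis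
    have hp : ∀ i : ℕ, i ≤ 4 → ((q ^ 4 - q ^ i : ℕ) : ℤ) = (q:ℤ)^4 - (q:ℤ)^i := by
      intro i hi
      have h2 : q ^ i ≤ q ^ 4 := Nat.pow_le_pow_right (by omega) hi
      push_cast [Nat.cast_sub h2]
      ring
    simp only [Fin.val_zero, Fin.val_one, show ((2 : Fin 4) : ℕ) = 2 from rfl,
      show ((3 : Fin 4) : ℕ) = 3 from rfl] at hthis
    rw [hp 0 (by omega), hp 1 (by omega), hp 2 (by omega), hp 3 (by omega)] at hthis
    rw [Nat.cast_sub h1] at hthis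
    push_cast at hthis
    rw [hthis]
    ring
  have hne : ((q : ℤ) - 1) ≠ 0 := by
    have : (2 : ℤ) ≤ (q : ℤ) := by exact_mod_cast hq2
    omega
  apply mul_left_cancel₀ hne
  rw [hcast]
  ring
end H4
end H4section

/-- The number of strong realizations in `ℙ³(𝔽_q)` of the 7-point configuration `h₄` with
full lines `{{0,1,2},{0,3,4}}` and full planes
`{{0,1,2,3,4},{0,1,2,5},{0,1,2,6},{0,3,4,5},{0,3,4,6},{1,3,5,6},{2,4,5,6}}` is
`|PGL₄(𝔽_q)| = q⁶(q⁴−1)(q³−1)(q²−1)`. -/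
theorem count_strong_realizations_h4 (q : ℕ) (F : Type*) [Field F] [Fintype F]
    (hq : Fintype.card F = q) :
    (Nat.card {σ : Fin 7 → Projectivization F (Fin 4 → F) //
        IsStrongRealization F
          ({{0, 1, 2}, {0, 3, 4}} : Finset (Finset (Fin 7)))
          ({{0, 1, 2, 3, 4}, {0, 1, 2, 5}, {0, 1, 2, 6}, {0, 3, 4, 5}, {0, 3, 4, 6}, {1, 3, 5, 6}, {2, 4, 5, 6}} : Finset (Finset (Fin 7))) σ} : ℤ) =
      (q : ℤ) ^ 6 * ((q : ℤ) ^ 4 - 1) * ((q : ℤ) ^ 3 - 1) * ((q : ℤ) ^ 2 - 1) := by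
  exact H4.main_count q hq
end

section
/- The number of injective maps σ from {0,1,2,3,4,5,6} to ℙ²(𝔽_q) such that, for every 3-element subset T of {0,…,6}, the set σ(T) is collinear if and only if T is one of the seven Fano lines {0,1,2},{0,3,4},{0,5,6},{1,3,5},{1,4,6},{2,3,6},{2,4,5}, equals |PGL₃(𝔽_q)| = q³(q³−1)(q²−1) if q is even, and equals 0 if q is odd. -/
/-- A set of points of `ℙ²(F)` (the projectivization of `F³`) is collinear if
representative vectors of the points span a subspace of `F³` of dimension at most 2. -/
def IsCollinearSetP2 (F : Type*) [Field F] (S : Set (Projectivization F (Fin 3 → F))) : Prop :=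
  Module.finrank F (Submodule.span F (Projectivization.rep '' S)) ≤ 2

/-!
Points `3, 4, 5, 6` of a Fano configuration are in general position, so after a projective
change of coordinates they are `[e₀], [e₁], [e₂], [w]` with all coordinates of `w` nonzero.
Every other point is the intersection of two Fano lines through these four, which forces the
configuration to be `g • fano` for a diagonal `g`, where `fano` is the standard configuration.
So the configurations form the `GL₃`-orbit of `fano` when `fano` is itself one, and there are
none otherwise. The stabilizer of `fano` is the group of scalars, so the orbit has
`|GL₃| / (q - 1) = |PGL₃|` elements. Finally, `fano` is a configuration exactly in
characteristic `2`: the points `[1,1,0], [1,0,1], [0,1,1]` must be collinear, and their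
determinant is `-2`.
-/

open Projectivization Matrix
open scoped LinearAlgebra.Projectivization

lemma Matrix.det_of_mulVec {n R : Type*} [Fintype n] [DecidableEq n] [CommRing R]
    (M : Matrix n n R) (x : n → n → R) :
    (of fun i => M *ᵥ x i).det = M.det * (of x).det := by
  have : (of fun i => M *ᵥ x i) = of x * Mᵀ := by
    ext i j
    simp [mul_apply, mulVec, dotProduct, mul_comm]
  rw [this, det_mul, det_transpose, mul_comm]

lemma Matrix.GeneralLinearGroup.scalar_injective {n R : Type*} [Fintype n] [DecidableEq n]
    [Nonempty n] [Semiring R] : Function.Injective (scalar n : Rˣ →* GL n R) := by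
  intro u v huv
  obtain ⟨i⟩ := ‹Nonempty n›
  ext
  simpa using congrArg (fun g : GL n R => g i i) huv

lemma Set.image_finset_triple {α β : Type*} [DecidableEq α] (f : α → β) (i j k : α) :
    f '' ↑({i, j, k} : Finset α) = Set.range (f ∘ ![i, j, k]) := by
  rw [Set.range_comp, range_cons, range_cons, range_cons, range_empty, Set.union_empty,
    ← Set.insert_eq, ← Set.insert_eq]
  simp

section Fano

variable {F : Type*} [Field F]

lemma isCollinearSetP2_range_iff (p : Fin 3 → ℙ F (Fin 3 → F)) :
    IsCollinearSetP2 F (Set.range p) ↔ (of fun i => (p i).rep).det = 0 := by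
  have hle : (Set.range fun i => (p i).rep).finrank F ≤ 3 := by
    simpa using finrank_range_le_card fun i => (p i).rep
  have hli : LinearIndependent F (fun i => (p i).rep) ↔ (of fun i => (p i).rep).det ≠ 0 := by
    rw [← isUnit_iff_ne_zero, ← isUnit_iff_isUnit_det, ← linearIndependent_rows_iff_isUnit]
    rfl
  rw [IsCollinearSetP2, ← Set.range_comp, Function.comp_def, ← not_iff_not, ← ne_eq, ← hli,
    linearIndependent_iff_card_eq_finrank_span, Fintype.card_fin]
  unfold Set.finrank at hle ⊢
  omega

lemma det_of_rep_mk_eq_zero_iff (x : Fin 3 → Fin 3 → F) (hx : ∀ i, x i ≠ 0) :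
    (of fun i => (mk F (x i) (hx i)).rep).det = 0 ↔ (of x).det = 0 := by
  choose a ha using fun i => exists_smul_eq_mk_rep F (x i) (hx i)
  have : (of fun i => (mk F (x i) (hx i)).rep) = of fun i j => (a i : F) * of x i j := by
    ext i j
    simp [← ha, Units.smul_def]
  rw [this, det_mul_column, mul_eq_zero,
    or_iff_right (Finset.prod_ne_zero_iff.2 fun i _ => (a i).ne_zero)]

lemma isCollinearSetP2_range_mk_iff (x : Fin 3 → Fin 3 → F) (hx : ∀ i, x i ≠ 0) :
    IsCollinearSetP2 F (Set.range fun i => mk F (x i) (hx i)) ↔ (of x).det = 0 := by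
  rw [isCollinearSetP2_range_iff, det_of_rep_mk_eq_zero_iff]

def fanoLines : Finset (Finset (Fin 7)) :=
  {{0, 1, 2}, {0, 3, 4}, {0, 5, 6}, {1, 3, 5}, {1, 4, 6}, {2, 3, 6}, {2, 4, 5}}

def IsFanoConfiguration (σ : Fin 7 → ℙ F (Fin 3 → F)) : Prop :=
  ∀ T : Finset (Fin 7), T.card = 3 → (IsCollinearSetP2 F (σ '' ↑T) ↔ T ∈ fanoLines)

lemma isFanoConfiguration_mk_iff (x : Fin 7 → Fin 3 → F) (hx : ∀ i, x i ≠ 0) :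
    IsFanoConfiguration (fun i => mk F (x i) (hx i)) ↔ ∀ i j k, i ≠ j → i ≠ k → j ≠ k →
      ((of (x ∘ ![i, j, k])).det = 0 ↔ {i, j, k} ∈ fanoLines) := by
  have hcol (i j k : Fin 7) : IsCollinearSetP2 F
      ((fun i => mk F (x i) (hx i)) '' ↑({i, j, k} : Finset (Fin 7))) ↔
        (of (x ∘ ![i, j, k])).det = 0 := by
    rw [Set.image_finset_triple]
    exact isCollinearSetP2_range_mk_iff (x ∘ ![i, j, k]) fun t => hx _
  refine ⟨fun h i j k hij hik hjk => ?_, fun h T hT => ?_⟩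
  · rw [← hcol, h _ (Finset.card_eq_three.2 ⟨i, j, k, hij, hik, hjk, rfl⟩)]
  · obtain ⟨i, j, k, hij, hik, hjk, rfl⟩ := Finset.card_eq_three.1 hT
    rw [hcol, h i j k hij hik hjk]

variable {σ : Fin 7 → ℙ F (Fin 3 → F)}

lemma isFanoConfiguration_iff_det_rep : IsFanoConfiguration σ ↔ ∀ i j k, i ≠ j → i ≠ k → j ≠ k →
    ((of ((fun i => (σ i).rep) ∘ ![i, j, k])).det = 0 ↔ {i, j, k} ∈ fanoLines) := by
  conv_lhs => rw [← funext fun i => mk_rep (σ i)]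
  exact isFanoConfiguration_mk_iff _ _

lemma exists_third_point_not_on_line :
    ∀ i j : Fin 7, i ≠ j → ∃ k, i ≠ k ∧ j ≠ k ∧ {i, j, k} ∉ fanoLines := by
  decide

lemma IsFanoConfiguration.injective (hσ : IsFanoConfiguration σ) : Function.Injective σ := by
  intro i j hij
  by_contra hne
  obtain ⟨k, hik, hjk, hline⟩ := exists_third_point_not_on_line i j hne
  refine hline ((isFanoConfiguration_iff_det_rep.1 hσ i j k hne hik hjk).1 ?_)
  exact det_zero_of_row_eq (i := 0) (j := 1) (by decide) (congrArg Projectivization.rep hij)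

lemma IsFanoConfiguration.smul (hσ : IsFanoConfiguration σ) (g : GL (Fin 3) F) :
    IsFanoConfiguration (g • σ) := by
  have hgσ : g • σ = fun i => mk F (g • (σ i).rep) ((smul_ne_zero_iff_ne g).2 (rep_nonzero _)) := by
    funext i
    conv_lhs => rw [Pi.smul_apply, ← mk_rep (σ i)]
    rfl
  rw [hgσ, isFanoConfiguration_mk_iff]
  intro i j k hij hik hjk
  rw [← isFanoConfiguration_iff_det_rep.1 hσ i j k hij hik hjk]
  change (of fun t => (g : Matrix (Fin 3) (Fin 3) F) *ᵥ _).det = 0 ↔ _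
  rw [det_of_mulVec, mul_eq_zero, or_iff_right g.det_ne_zero]
  rfl

variable (R : Type*) [Zero R] [One R] in
def fanoVec : Fin 7 → Fin 3 → R :=
  ![![1, 1, 0], ![1, 0, 1], ![0, 1, 1], ![1, 0, 0], ![0, 1, 0], ![0, 0, 1], ![1, 1, 1]]

lemma fanoVec_ne_zero (i : Fin 7) : fanoVec F i ≠ 0 := by
  fin_cases i <;> simp [fanoVec, funext_iff, Fin.forall_fin_succ]

lemma map_fanoVec {R S : Type*} [NonAssocSemiring R] [NonAssocSemiring S] (f : R →+* S)
    (i : Fin 7) (c : Fin 3) : f (fanoVec R i c) = fanoVec S i c := by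
  fin_cases i <;> fin_cases c <;> simp [fanoVec]

lemma det_fanoVec_zmod_two_eq_zero_iff : ∀ i j k : Fin 7, i ≠ j → i ≠ k → j ≠ k →
    ((of (fanoVec (ZMod 2) ∘ ![i, j, k])).det = 0 ↔ {i, j, k} ∈ fanoLines) := by
  simp only [det_fin_three]
  decide

lemma det_fanoVec_eq_zero_iff [CharP F 2] {i j k : Fin 7} (hij : i ≠ j) (hik : i ≠ k)
    (hjk : j ≠ k) : (of (fanoVec F ∘ ![i, j, k])).det = 0 ↔ {i, j, k} ∈ fanoLines := by
  let φ := ZMod.castHom (dvd_refl 2) F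
  have : of (fanoVec F ∘ ![i, j, k]) = φ.mapMatrix (of (fanoVec (ZMod 2) ∘ ![i, j, k])) := by
    ext r c
    simp [map_fanoVec]
  rw [this, ← RingHom.map_det, map_eq_zero_iff φ (ZMod.castHom_injective F)]
  exact det_fanoVec_zmod_two_eq_zero_iff i j k hij hik hjk

variable (F) in
def fano : Fin 7 → ℙ F (Fin 3 → F) := fun i => mk F (fanoVec F i) (fanoVec_ne_zero i)

lemma isFanoConfiguration_fano_iff : IsFanoConfiguration (fano F) ↔ ringChar F = 2 := by
  constructor
  · intro h
    have h012 := ((isFanoConfiguration_mk_iff _ _).1 h 0 1 2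
      (by decide) (by decide) (by decide)).2 (by decide)
    simp [det_fin_three, fanoVec] at h012
    by_contra h2
    exact Ring.two_ne_zero h2 (by linear_combination -h012)
  · intro h
    have : CharP F 2 := ringChar.eq_iff.1 h
    exact (isFanoConfiguration_mk_iff _ _).2 fun i j k => det_fanoVec_eq_zero_iff

lemma exists_smul_fano_eq_of_frame (x : Fin 7 → Fin 3 → F) (hx : ∀ i, x i ≠ 0)
    (h3 : x 3 = fanoVec F 3) (h4 : x 4 = fanoVec F 4) (h5 : x 5 = fanoVec F 5)
    (hfano : IsFanoConfiguration fun i => mk F (x i) (hx i)) :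
    ∃ g : GL (Fin 3) F, g • fano F = fun i => mk F (x i) (hx i) := by
  have hdet := (isFanoConfiguration_mk_iff x hx).1 hfano
  have hw0 := (hdet 4 5 6 (by decide) (by decide) (by decide)).not.2 (by decide)
  have hw1 := (hdet 3 5 6 (by decide) (by decide) (by decide)).not.2 (by decide)
  have hw2 := (hdet 3 4 6 (by decide) (by decide) (by decide)).not.2 (by decide)
  have h034 := (hdet 0 3 4 (by decide) (by decide) (by decide)).2 (by decide)
  have h056 := (hdet 0 5 6 (by decide) (by decide) (by decide)).2 (by decide)
  have h135 := (hdet 1 3 5 (by decide) (by decide) (by decide)).2 (by decide)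
  have h146 := (hdet 1 4 6 (by decide) (by decide) (by decide)).2 (by decide)
  have h236 := (hdet 2 3 6 (by decide) (by decide) (by decide)).2 (by decide)
  have h245 := (hdet 2 4 5 (by decide) (by decide) (by decide)).2 (by decide)
  simp [det_fin_three, h3, h4, h5, fanoVec] at hw0 hw1 hw2 h034 h056 h135 h146 h236 h245
  refine ⟨GeneralLinearGroup.mkOfDetNeZero (diagonal (x 6))
    (by simp [det_diagonal, Fin.prod_univ_three, hw0, hw1, hw2]), funext fun i => ?_⟩
  simp only [fano, Pi.smul_apply, smul_mk]
  rw [mk_eq_mk_iff_crossProduct_eq_zero]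
  change crossProduct (diagonal (x 6) *ᵥ fanoVec F i) (x i) = 0
  -- e.g. `x 0` lies on the lines {0, 3, 4} and {0, 5, 6}, which pins it to a multiple of
  -- `(x 6 0, x 6 1, 0)`
  fin_cases i <;> ext r <;> fin_cases r <;> simp [cross_apply, fanoVec, mulVec_diagonal, h3, h4, h5]
  all_goals grind

lemma IsFanoConfiguration.exists_smul_fano_eq (hσ : IsFanoConfiguration σ) :
    ∃ g : GL (Fin 3) F, g • fano F = σ := by
  set u := fun i => (σ i).rep
  have h345 := (isFanoConfiguration_iff_det_rep.1 hσ 3 4 5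
    (by decide) (by decide) (by decide)).not.2 (by decide)
  let P := GeneralLinearGroup.mkOfDetNeZero (of (u ∘ ![3, 4, 5]))ᵀ (by rwa [det_transpose])
  have hP (j : Fin 3) : P • fanoVec F (![3, 4, 5] j) = u (![3, 4, 5] j) := by
    change (of (u ∘ ![3, 4, 5]))ᵀ *ᵥ _ = _
    fin_cases j <;> ext r <;> simp [mulVec, dotProduct, Fin.sum_univ_three, fanoVec]
  let x i := P⁻¹ • u i
  have hx i : x i ≠ 0 := (smul_ne_zero_iff_ne _).2 (rep_nonzero _)
  have hxP (j : Fin 3) : x (![3, 4, 5] j) = fanoVec F (![3, 4, 5] j) := by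
    rw [← inv_smul_smul P (fanoVec F _), hP]
  have hτ : P⁻¹ • σ = fun i => mk F (x i) (hx i) := by
    funext i
    conv_lhs => rw [Pi.smul_apply, ← mk_rep (σ i)]
    rfl
  obtain ⟨g, hg⟩ := exists_smul_fano_eq_of_frame x hx (hxP 0) (hxP 1) (hxP 2) (hτ ▸ hσ.smul P⁻¹)
  exact ⟨P * g, by rw [mul_smul, hg, ← hτ, smul_inv_smul]⟩

lemma IsFanoConfiguration.ringChar_eq_two (hσ : IsFanoConfiguration σ) : ringChar F = 2 := by
  obtain ⟨g, rfl⟩ := hσ.exists_smul_fano_eq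
  simpa [isFanoConfiguration_fano_iff] using hσ.smul g⁻¹

lemma setOf_isFanoConfiguration_eq_orbit (h : ringChar F = 2) :
    {σ | IsFanoConfiguration σ} = MulAction.orbit (GL (Fin 3) F) (fano F) := by
  ext σ
  refine ⟨fun hσ => hσ.exists_smul_fano_eq, ?_⟩
  rintro ⟨g, rfl⟩
  exact (isFanoConfiguration_fano_iff.2 h).smul g

lemma stabilizer_fano :
    MulAction.stabilizer (GL (Fin 3) F) (fano F) = Subgroup.center (GL (Fin 3) F) := by
  ext g
  rw [MulAction.mem_stabilizer_iff, GeneralLinearGroup.mem_center_iff_val_mem_range_scalar]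
  constructor
  · intro hg
    have h (i : Fin 7) :
        crossProduct ((g : Matrix (Fin 3) (Fin 3) F) *ᵥ fanoVec F i) (fanoVec F i) = 0 :=
      (mk_eq_mk_iff_crossProduct_eq_zero _ _).1 (congrFun hg i)
    have h3 := h 3
    have h4 := h 4
    have h5 := h 5
    have h6 := h 6
    simp [cross_apply, fanoVec, mulVec, dotProduct, Fin.sum_univ_three, funext_iff,
      Fin.forall_fin_succ] at h3 h4 h5 h6
    refine ⟨g 0 0, ?_⟩
    ext r c
    fin_cases r <;> fin_cases c <;> simp <;> grind
  · rintro ⟨c, hc⟩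
    funext i
    simp only [fano, Pi.smul_apply, smul_mk]
    rw [mk_eq_mk_iff_crossProduct_eq_zero]
    change crossProduct ((g : Matrix (Fin 3) (Fin 3) F) *ᵥ fanoVec F i) (fanoVec F i) = 0
    rw [← hc, scalar_apply, ← smul_one_eq_diagonal, smul_mulVec, one_mulVec, map_smul,
      LinearMap.smul_apply, _root_.cross_self, smul_zero]

lemma card_orbit_fano_mul_card_sub_one [Fintype F] :
    Nat.card (MulAction.orbit (GL (Fin 3) F) (fano F)) * (Fintype.card F - 1) =
      Nat.card (GL (Fin 3) F) := by
  classical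
  have hcenter : Nat.card (Subgroup.center (GL (Fin 3) F)) = Fintype.card F - 1 := by
    rw [GeneralLinearGroup.center_eq_range_scalar, ← Fintype.card_units,
      ← Nat.card_eq_fintype_card]
    exact Nat.card_congr (MonoidHom.ofInjective GeneralLinearGroup.scalar_injective).toEquiv.symm
  rw [Nat.card_congr (MulAction.orbitEquivQuotientStabilizer _ _), stabilizer_fano, ← hcenter,
    ← Subgroup.card_eq_card_quotient_mul_card_subgroup]

lemma card_setOf_isFanoConfiguration [Fintype F] (h : ringChar F = 2) :
    (Nat.card {σ : Fin 7 → ℙ F (Fin 3 → F) | IsFanoConfiguration σ} : ℤ) =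
      (Fintype.card F : ℤ) ^ 3 * ((Fintype.card F : ℤ) ^ 3 - 1) *
        ((Fintype.card F : ℤ) ^ 2 - 1) := by
  have key := card_orbit_fano_mul_card_sub_one (F := F)
  rw [← setOf_isFanoConfiguration_eq_orbit h, Matrix.card_GL_field, Fin.prod_univ_three] at key
  simp only [Fin.val_zero, Fin.val_one, Fin.val_two, pow_zero, pow_one] at key
  set q := Fintype.card F
  have hq1 : 1 < q := Fintype.one_lt_card
  have h1 : 1 ≤ q ^ 3 := Nat.one_le_pow _ _ (by omega)
  have h2 : q ≤ q ^ 3 := Nat.le_self_pow (by norm_num) q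
  have h3 : q ^ 2 ≤ q ^ 3 := Nat.pow_le_pow_right (by omega) (by norm_num)
  zify [h1, h2, h3, hq1.le] at key
  refine mul_right_cancel₀ (sub_ne_zero.2 (by exact_mod_cast hq1.ne') : (q : ℤ) - 1 ≠ 0) ?_
  rw [key]
  ring

end Fano

/-- The number of injective maps `σ` from `{0,…,6}` to `ℙ²(𝔽_q)` such that, for every
3-element subset `T` of `{0,…,6}`, the set `σ(T)` is collinear if and only if `T` is one of
the seven Fano lines `{0,1,2},{0,3,4},{0,5,6},{1,3,5},{1,4,6},{2,3,6},{2,4,5}`, equals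
`|PGL₃(𝔽_q)| = q³(q³−1)(q²−1)` if `q` is even, and equals `0` if `q` is odd. -/
theorem count_fano_embeddings (q : ℕ) (F : Type*) [Field F] [Fintype F]
    (hq : Fintype.card F = q) :
    (Nat.card {σ : Fin 7 → Projectivization F (Fin 3 → F) //
        Function.Injective σ ∧
          ∀ T : Finset (Fin 7), T.card = 3 →
            (IsCollinearSetP2 F (σ '' ↑T) ↔
              T ∈ ({{0, 1, 2}, {0, 3, 4}, {0, 5, 6}, {1, 3, 5}, {1, 4, 6}, {2, 3, 6},
                {2, 4, 5}} : Finset (Finset (Fin 7))))} : ℤ) =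
      if Even q then (q : ℤ) ^ 3 * ((q : ℤ) ^ 3 - 1) * ((q : ℤ) ^ 2 - 1) else 0 := by
  have hcard : Nat.card {σ : Fin 7 → ℙ F (Fin 3 → F) //
      Function.Injective σ ∧ IsFanoConfiguration σ} = Nat.card {σ | IsFanoConfiguration σ} :=
    Nat.card_congr (Equiv.subtypeEquivRight fun σ =>
      and_iff_right_of_imp IsFanoConfiguration.injective)
  have hchar : Even q ↔ ringChar F = 2 := by
    rw [FiniteField.even_card_iff_char_two, hq, Nat.even_iff]
  refine (congrArg (Nat.cast : ℕ → ℤ) hcard).trans ?_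
  split_ifs with h
  · rw [card_setOf_isFanoConfiguration (hchar.1 h), hq]
  · have : IsEmpty {σ | IsFanoConfiguration σ} := ⟨fun σ => h (hchar.2 σ.2.ringChar_eq_two)⟩
    simp
end
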